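/- arXiv:2309.11624 — 6 statements merged into one kernel-verified Lean document; each statement's English description precedes it below -/
import Mathlib

section
/- Let Q be a finite quiver that is not a cyclic quiver, and let a be an arrow of Q. Define Φ_a as the set of paths ω in Q such that a is a subpath of ω, and for every intermediate vertex i of ω (vertices t(ω^j) for 0 ≤ j < length(ω)-1), there is exactly one arrow of Q starting at i and exactly one arrow of Q ending at i. Then Φ_a has a unique element of maximal length. -/
/-!
Every path in `Φ_a` is repetition-free: a repeated arrow would cut out a closed walk through
vertices with exactly one incoming and one outgoing arrow. The arrows of such a walk are closed
under adjacency, so by connectedness they are all the arrows and the quiver would be cyclic.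
Hence `Φ_a` is finite and has a longest element.

For uniqueness, write two longest elements as `u a v` and `u' a v'`. The splices `u' a v` and
`u a v'` again lie in `Φ_a`, which forces `|u| = |u'|` and `|v| = |v'|`. Since every intermediate
vertex has a single outgoing arrow, the part after `a` is determined by its length; reversing the
quiver, so is the part before `a`.
-/

namespace UMPPaper

variable {V A : Type}

/-- A (non-trivial) path in the quiver with source/target maps `s`, `t`,
represented as a nonempty list of composable arrows. -/
def IsPath (s t : A → V) (p : List A) : Prop :=
  p ≠ [] ∧ p.Chain' (fun a b => t a = s b)

/-- `Q` is a cyclic quiver: there is a repetition-free path through all arrows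
(and all vertices) whose target equals its source. -/
def IsCyclicQuiver (s t : A → V) : Prop :=
  ∃ p : List A, IsPath s t p ∧ p.Nodup ∧ (∀ a : A, a ∈ p) ∧
    (∀ v : V, ∃ a ∈ p, s a = v ∨ t a = v) ∧
    (∃ x ∈ p.getLast?, ∃ y ∈ p.head?, t x = s y)

/-- `Φ_a`: paths containing the arrow `a` as a subpath, all of whose
intermediate vertices have exactly one incoming and exactly one outgoing arrow. -/
def Phi (s t : A → V) (a : A) : Set (List A) :=
  {p | IsPath s t p ∧ [a] <:+: p ∧
    ∀ x ∈ p.dropLast, (∃! b : A, s b = t x) ∧ (∃! b : A, t b = t x)}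

/-- Specification of the assignment `a ↦ ω_a`. -/
def OmegaSpec (s t : A → V) (ω : A → List A) : Prop :=
  (IsCyclicQuiver s t → ∃ p : List A, IsPath s t p ∧ p.Nodup ∧ (∀ a : A, a ∈ p) ∧
      (∃ x ∈ p.getLast?, ∃ y ∈ p.head?, t x = s y) ∧ ∀ a : A, ω a = p) ∧
  (¬ IsCyclicQuiver s t →
    ∀ a : A, ω a ∈ Phi s t a ∧ ∀ q ∈ Phi s t a, q.length ≤ (ω a).length)

/-- The quiver is connected (as an undirected graph on vertices). -/
def QConnected (s t : A → V) : Prop :=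
  ∀ u v : V, Relation.ReflTransGen
    (fun x y => ∃ a : A, (s a = x ∧ t a = y) ∨ (s a = y ∧ t a = x)) u v

section ListLemmas

variable {α β : Type*}

theorem _root_.List.Forall₂.exists_mem_right {R : α → β → Prop} {l₁ : List α} {l₂ : List β}
    (h : List.Forall₂ R l₁ l₂) {x : α} (hx : x ∈ l₁) : ∃ y ∈ l₂, R x y := by
  induction h with
  | nil => simp at hx
  | cons hxy _ ih =>
    rcases List.mem_cons.1 hx with rfl | hx
    · exact ⟨_, List.mem_cons_self, hxy⟩
    · obtain ⟨y, hy, hxy⟩ := ih hx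
      exact ⟨y, List.mem_cons_of_mem _ hy, hxy⟩

theorem _root_.List.Forall₂.exists_mem_left {R : α → β → Prop} {l₁ : List α} {l₂ : List β}
    (h : List.Forall₂ R l₁ l₂) {y : β} (hy : y ∈ l₂) : ∃ x ∈ l₁, R x y :=
  (List.Forall₂.flip (R := flip R) h).exists_mem_right hy

theorem _root_.List.exists_cons_append_singleton_infix_of_not_nodup {l : List α} (h : ¬ l.Nodup) :
    ∃ b c, (b :: c).Nodup ∧ b :: c ++ [b] <:+: l := by
  induction l with
  | nil => simp at h
  | cons x l ih =>
    by_cases hl : l.Nodup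
    · have hx : x ∈ l := by simpa [hl] using h
      obtain ⟨c, z, rfl⟩ := List.append_of_mem hx
      have hcz := List.nodup_append.1 hl
      refine ⟨x, c, List.nodup_cons.2 ⟨fun hxc => ?_, hcz.1⟩, ⟨[], z, by simp⟩⟩
      exact hcz.2.2 x hxc x List.mem_cons_self rfl
    · obtain ⟨b, c, hbc, hinf⟩ := ih hl
      exact ⟨b, c, hbc, List.infix_cons hinf⟩

theorem _root_.List.infix_dropLast_of_concat_infix {l p : List α} {b : α} (h : l ++ [b] <:+: p) :
    l <:+: p.dropLast := by
  obtain ⟨r, z, rfl⟩ := h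
  rw [show r ++ (l ++ [b]) ++ z = (r ++ l) ++ b :: z by simp, List.dropLast_append_cons]
  exact List.infix_append _ _ _

theorem _root_.List.IsChain.eq_of_length_eq {R : α → α → Prop} {x : α} {l l' : List α}
    (h : (x :: l).IsChain R) (h' : (x :: l').IsChain R) (hlen : l.length = l'.length)
    (huniq : ∀ y ∈ (x :: l).dropLast, ∀ z z', R y z → R y z' → z = z') : l = l' := by
  induction l generalizing x l' with
  | nil => exact (List.length_eq_zero_iff.1 hlen.symm).symm
  | cons y l ih =>
    obtain _ | ⟨y', l'⟩ := l'
    · simp at hlen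
    obtain ⟨hxy, h⟩ := List.isChain_cons_cons.1 h
    obtain ⟨hxy', h'⟩ := List.isChain_cons_cons.1 h'
    obtain rfl := huniq x (by simp) y y' hxy hxy'
    rw [ih h h' (by simpa using hlen) fun z hz => huniq z (by simp_all)]

end ListLemmas

section

variable {s t : A → V}

theorem QConnected.forall_of_iff (hconn : QConnected s t) {P : V → Prop}
    (hP : ∀ e, P (s e) ↔ P (t e)) {u : V} (hu : P u) (v : V) : P v := by
  induction hconn u v with
  | refl => exact hu
  | tail _ hxy ih =>
    obtain ⟨e, ⟨rfl, rfl⟩ | ⟨rfl, rfl⟩⟩ := hxy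
    exacts [(hP e).1 ih, (hP e).2 ih]

theorem isCyclicQuiver_of_closed_walk (hconn : QConnected s t) {b : A} {c : List A}
    (hwalk : (b :: c ++ [b]).IsChain (fun x y => t x = s y)) (hnd : (b :: c).Nodup)
    (hdeg : ∀ x ∈ b :: c, (∃! e, s e = t x) ∧ (∃! e, t e = t x)) : IsCyclicQuiver s t := by
  have hrel := List.isChain_cons_append_singleton_iff_forall₂.1 hwalk
  have hmem : ∀ {y}, y ∈ c ++ [b] ↔ y ∈ b :: c := by simp [or_comm]
  have hsucc : ∀ x ∈ b :: c, ∃ y ∈ b :: c, t x = s y := fun x hx => by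
    obtain ⟨y, hy, hxy⟩ := hrel.exists_mem_right hx
    exact ⟨y, hmem.1 hy, hxy⟩
  have hpred : ∀ y ∈ b :: c, ∃ x ∈ b :: c, t x = s y := fun y hy =>
    hrel.exists_mem_left (hmem.2 hy)
  have hout : ∀ e, (∃ x ∈ b :: c, t x = s e) → e ∈ b :: c := by
    rintro e ⟨x, hx, hxe⟩
    obtain ⟨y, hy, hxy⟩ := hsucc x hx
    rwa [(hdeg x hx).1.unique hxe.symm hxy.symm]
  have hin : ∀ e, (∃ x ∈ b :: c, t x = t e) → e ∈ b :: c := by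
    rintro e ⟨x, hx, hxe⟩
    rwa [(hdeg x hx).2.unique hxe.symm rfl]
  have hcover : ∀ v, ∃ x ∈ b :: c, t x = v :=
    hconn.forall_of_iff (fun e => ⟨fun h => ⟨e, hout e h, rfl⟩, fun h => hpred e (hin e h)⟩)
      ⟨b, List.mem_cons_self, rfl⟩
  obtain ⟨hchain, -, hclose⟩ := List.isChain_append.1 hwalk
  refine ⟨b :: c, ⟨List.cons_ne_nil _ _, hchain⟩, hnd, fun e => hout e (hcover _),
    fun v => ?_, ?_⟩
  · obtain ⟨x, hx, rfl⟩ := hcover v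
    exact ⟨x, hx, Or.inr rfl⟩
  · have hlast := List.getLast?_eq_some_getLast (List.cons_ne_nil b c)
    exact ⟨_, hlast, b, rfl, hclose _ hlast b rfl⟩

theorem singleton_mem_phi (a : A) : [a] ∈ Phi s t a :=
  ⟨⟨List.cons_ne_nil _ _, List.isChain_singleton _⟩, List.infix_refl _, by simp⟩

theorem nodup_of_mem_phi (hconn : QConnected s t) (hnc : ¬ IsCyclicQuiver s t) {a : A}
    {p : List A} (hp : p ∈ Phi s t a) : p.Nodup := by
  by_contra hnd
  obtain ⟨b, c, hbc, hinf⟩ := List.exists_cons_append_singleton_infix_of_not_nodup hnd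
  obtain ⟨⟨-, hchain⟩, -, hdeg⟩ := hp
  exact hnc <| isCyclicQuiver_of_closed_walk hconn (hchain.infix hinf) hbc fun x hx =>
    hdeg x ((List.infix_dropLast_of_concat_infix hinf).subset hx)

theorem finite_phi [Fintype A] (hconn : QConnected s t) (hnc : ¬ IsCyclicQuiver s t) (a : A) :
    (Phi s t a).Finite :=
  (List.finite_length_le A (Fintype.card A)).subset fun _ hp =>
    (nodup_of_mem_phi hconn hnc hp).length_le_card

theorem reverse_mem_phi {a : A} {p : List A} (hp : p ∈ Phi s t a) : p.reverse ∈ Phi t s a := by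
  obtain ⟨⟨hne, hchain⟩, hinf, hdeg⟩ := hp
  refine ⟨⟨by simpa using hne, List.isChain_reverse.2 (hchain.imp fun _ _ h => h.symm)⟩,
    by simpa using hinf.reverse, fun y hy => ?_⟩
  rw [List.dropLast_reverse, List.mem_reverse] at hy
  obtain ⟨x, hx, hxy⟩ := (List.isChain_iff_forall₂.1 hchain).exists_mem_left hy
  rw [← hxy]
  exact (hdeg x hx).symm

theorem splice_mem_phi {a : A} {u v u' v' : List A} (hw : u ++ a :: v ∈ Phi s t a)
    (hw' : u' ++ a :: v' ∈ Phi s t a) : u' ++ a :: v ∈ Phi s t a := by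
  obtain ⟨⟨-, hchain⟩, -, hdeg⟩ := hw
  obtain ⟨⟨-, hchain'⟩, -, hdeg'⟩ := hw'
  obtain ⟨-, hchain_av, -⟩ := List.isChain_append.1 hchain
  obtain ⟨hchain_u', -, hlink'⟩ := List.isChain_append.1 hchain'
  refine ⟨⟨by simp, List.isChain_append.2 ⟨hchain_u', hchain_av, hlink'⟩⟩, ⟨u', v, by simp⟩, ?_⟩
  intro x hx
  rw [List.dropLast_append_cons, List.mem_append] at hx
  rcases hx with hx | hx
  · exact hdeg' x (by rw [List.dropLast_append_cons]; exact List.mem_append_left _ hx)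
  · exact hdeg x (by rw [List.dropLast_append_cons]; exact List.mem_append_right _ hx)

theorem eq_of_mem_phi_of_length_eq_right {a : A} {u v u' v' : List A}
    (hw : u ++ a :: v ∈ Phi s t a) (hw' : u' ++ a :: v' ∈ Phi s t a)
    (hlen : v.length = v'.length) : v = v' := by
  obtain ⟨⟨-, hchain⟩, -, hdeg⟩ := hw
  refine List.IsChain.eq_of_length_eq (List.isChain_append.1 hchain).2.1
    (List.isChain_append.1 hw'.1.2).2.1 hlen fun y hy z z' hz hz' => ?_
  have hy : y ∈ (u ++ a :: v).dropLast := by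
    rw [List.dropLast_append_cons]; exact List.mem_append_right _ hy
  exact (hdeg y hy).1.unique hz.symm hz'.symm

theorem eq_of_mem_phi_of_length_eq_left {a : A} {u v u' v' : List A}
    (hw : u ++ a :: v ∈ Phi s t a) (hw' : u' ++ a :: v' ∈ Phi s t a)
    (hlen : u.length = u'.length) : u = u' := by
  have hrev := reverse_mem_phi hw
  have hrev' := reverse_mem_phi hw'
  simp only [List.reverse_append, List.reverse_cons, List.append_assoc, List.singleton_append]
    at hrev hrev'
  exact List.reverse_inj.1 (eq_of_mem_phi_of_length_eq_right hrev hrev' (by simpa using hlen))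

theorem eq_of_mem_phi_of_forall_length_le {a : A} {w w' : List A}
    (hw : w ∈ Phi s t a) (hw' : w' ∈ Phi s t a)
    (hmax : ∀ p ∈ Phi s t a, p.length ≤ w.length)
    (hmax' : ∀ p ∈ Phi s t a, p.length ≤ w'.length) : w' = w := by
  obtain ⟨u, v, rfl⟩ := List.append_of_mem ((List.singleton_infix_iff _ _).1 hw.2.1)
  obtain ⟨u', v', rfl⟩ := List.append_of_mem ((List.singleton_infix_iff _ _).1 hw'.2.1)
  have h₁ := hmax _ (splice_mem_phi hw hw')
  have h₂ := hmax' _ (splice_mem_phi hw hw')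
  have h₃ := hmax _ (splice_mem_phi hw' hw)
  have h₄ := hmax' _ (splice_mem_phi hw' hw)
  simp only [List.length_append, List.length_cons] at h₁ h₂ h₃ h₄
  rw [eq_of_mem_phi_of_length_eq_left hw hw' (by omega),
    eq_of_mem_phi_of_length_eq_right hw hw' (by omega)]

end

theorem stmt_0_general [Fintype A] (s t : A → V)
    (hconn : QConnected s t) (hnc : ¬ IsCyclicQuiver s t) (a : A) :
    ∃ w ∈ Phi s t a, (∀ p ∈ Phi s t a, p.length ≤ w.length) ∧
      ∀ w' ∈ Phi s t a, (∀ p ∈ Phi s t a, p.length ≤ w'.length) → w' = w := by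
  obtain ⟨w, hw, hmax⟩ :=
    (Phi s t a).exists_max_image List.length (finite_phi hconn hnc a) ⟨[a], singleton_mem_phi a⟩
  exact ⟨w, hw, hmax, fun w' hw' hmax' => eq_of_mem_phi_of_forall_length_le hw hw' hmax hmax'⟩

/-- Let `Q` be a finite (connected) quiver that is not a cyclic quiver and
`a` an arrow of `Q`. Then `Φ_a` has a unique element of maximal length. -/
theorem stmt_0 [Fintype V] [Fintype A] (s t : A → V)
    (hconn : QConnected s t) (hnc : ¬ IsCyclicQuiver s t) (a : A) :
    ∃ w ∈ Phi s t a, (∀ p ∈ Phi s t a, p.length ≤ w.length) ∧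
      ∀ w' ∈ Phi s t a, (∀ p ∈ Phi s t a, p.length ≤ w'.length) → w' = w :=
  stmt_0_general s t hconn hnc a

end UMPPaper
end

section
/- Let Q be a finite quiver that is not a cyclic quiver, and let a be an arrow of Q. Then the path ω_a (the path of maximal length in Φ_a) is repetition-free, i.e., no arrow occurs twice as a factor of ω_a. -/
/-!
If an arrow `b` occurred twice in `ω_a`, write `ω_a = u · (b v) · (b r)`. Repeating the loop
`b v` gives `u · (b v) · (b v) · (b r)`, which is again a path containing `a`, and all its
intermediate vertices are already intermediate vertices of `ω_a`. So it lies in `Φ_a` and is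
strictly longer than `ω_a`, contradicting maximality.
-/

namespace UMPPaper

variable {V A : Type}

theorem _root_.List.exists_eq_append_cons_append_cons_of_not_nodup {α : Type*} {l : List α}
    (h : ¬ l.Nodup) : ∃ u b v r, l = u ++ b :: v ++ b :: r := by
  obtain ⟨b, hb⟩ : ∃ b, [b, b].Sublist l := by simpa [List.nodup_iff_sublist] using h
  obtain ⟨l₁, l₂, rfl, hb₁, hb₂⟩ := List.cons_sublist_iff.mp hb
  obtain ⟨u, v, rfl⟩ := List.append_of_mem hb₁
  obtain ⟨x, r, rfl⟩ := List.append_of_mem (List.singleton_sublist.mp hb₂)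
  exact ⟨u, b, v ++ x, r, by simp⟩

section Pumping

variable {α : Type*} {u v r : List α} {b : α}

/-- Glue the prefix of the chain ending at the second `b` to the suffix starting at the first
`b`, overlapping in that `b`. -/
theorem _root_.List.IsChain.pump {R : α → α → Prop} (h : (u ++ b :: v ++ b :: r).IsChain R) :
    (u ++ b :: v ++ b :: v ++ b :: r).IsChain R := by
  have hpre : (u ++ b :: v ++ [b]).IsChain R :=
    h.infix ⟨[], r, by simp⟩
  have hsuf : ([b] ++ (v ++ b :: r)).IsChain R :=
    h.infix ⟨u, [], by simp⟩
  simpa using hpre.append_overlap hsuf (List.cons_ne_nil b [])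

theorem _root_.List.mem_pump_iff {x : α} :
    x ∈ u ++ b :: v ++ b :: v ++ b :: r ↔ x ∈ u ++ b :: v ++ b :: r := by
  simp only [List.mem_append, List.mem_cons]
  tauto

theorem _root_.List.dropLast_pump_subset :
    (u ++ b :: v ++ b :: v ++ b :: r).dropLast ⊆ (u ++ b :: v ++ b :: r).dropLast := by
  intro x
  simp only [List.dropLast_append_cons, List.mem_append, List.mem_cons]
  tauto

end Pumping

theorem pump_mem_Phi {s t : A → V} {a b : A} {u v r : List A}
    (hw : u ++ b :: v ++ b :: r ∈ Phi s t a) :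
    u ++ b :: v ++ b :: v ++ b :: r ∈ Phi s t a := by
  obtain ⟨⟨-, hchain⟩, ha, hmid⟩ := hw
  refine ⟨⟨by simp, hchain.pump⟩, ?_, fun x hx => hmid x (List.dropLast_pump_subset hx)⟩
  rw [List.singleton_infix_iff] at ha ⊢
  exact List.mem_pump_iff.mpr ha

theorem stmt_1_general (s t : A → V) (a : A)
    (w : List A) (hw : w ∈ Phi s t a)
    (hmax : ∀ p ∈ Phi s t a, p.length ≤ w.length) :
    w.Nodup := by
  by_contra hdup
  obtain ⟨u, b, v, r, rfl⟩ := List.exists_eq_append_cons_append_cons_of_not_nodup hdup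
  have hlen := hmax _ (pump_mem_Phi hw)
  simp only [List.length_append, List.length_cons] at hlen
  omega

/-- for a finite (connected) non-cyclic quiver, the path `ω_a`
(a path of maximal length in `Φ_a`) is repetition-free. -/
theorem stmt_1 [Fintype V] [Fintype A] (s t : A → V)
    (hconn : QConnected s t) (hnc : ¬ IsCyclicQuiver s t) (a : A)
    (w : List A) (hw : w ∈ Phi s t a)
    (hmax : ∀ p ∈ Phi s t a, p.length ≤ w.length) :
    w.Nodup :=
  stmt_1_general s t a w hw hmax

end UMPPaper
end

section
/- Let Q be a finite quiver and a, b arrows of Q. Then b is a subpath of ω_a if and only if ω_a = ω_b. -/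
namespace UMPPaper

variable {V A : Type}

/-!
An unbranched path (a chain of arrows all of whose inner vertices have exactly one incoming and
one outgoing arrow) is determined by any one of its arrows, forwards and backwards, up to its
length; and unbranched paths can be glued at a common arrow. Hence two unbranched paths through
`b` lie in a common one, and when `b` lies on `ω_a`, maximality forces `ω_a` and `ω_b` both to
equal it. In the cyclic case `ω` is constant.
-/

section

variable {s t : A → V}

/-- Recasting the condition of `Phi` as a condition on consecutive arrows makes it stable under
gluing at an arrow (`List.isChain_split`) and, with `s` and `t` swapped, under reversal. -/
def UnbranchedStep (s t : A → V) (x y : A) : Prop :=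
  t x = s y ∧ (∃! c, s c = t x) ∧ (∃! c, t c = t x)

lemma isChain_unbranchedStep_iff {p : List A} :
    p.IsChain (UnbranchedStep s t) ↔ p.IsChain (fun x y => t x = s y) ∧
      ∀ x ∈ p.dropLast, (∃! c, s c = t x) ∧ (∃! c, t c = t x) := by
  induction p with
  | nil => simp
  | cons x l ih =>
    cases l with
    | nil => simp
    | cons y l =>
      simp only [List.isChain_cons_cons, ih, List.dropLast_cons_cons, List.forall_mem_cons,
        UnbranchedStep]
      tauto

lemma mem_Phi_iff {a : A} {p : List A} :
    p ∈ Phi s t a ↔ [a] <:+: p ∧ p.IsChain (UnbranchedStep s t) := by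
  rw [isChain_unbranchedStep_iff]
  refine ⟨fun ⟨⟨_, hchain⟩, ha, hthin⟩ => ⟨ha, hchain, hthin⟩,
    fun ⟨ha, hchain, hthin⟩ => ⟨⟨?_, hchain⟩, ha, hthin⟩⟩
  rintro rfl
  simp at ha

lemma isChain_unbranchedStep_reverse {p : List A} (hp : p.IsChain (UnbranchedStep s t)) :
    p.reverse.IsChain (UnbranchedStep t s) := by
  refine List.isChain_reverse.mpr (hp.imp fun x y ⟨hxy, hout, hin⟩ => ?_)
  rw [UnbranchedStep, ← hxy]
  exact ⟨rfl, hin, hout⟩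

lemma prefix_or_prefix_of_isChain_unbranchedStep {x : A} {v v' : List A}
    (hv : (x :: v).IsChain (UnbranchedStep s t)) (hv' : (x :: v').IsChain (UnbranchedStep s t)) :
    v <+: v' ∨ v' <+: v := by
  induction v generalizing x v' with
  | nil => exact .inl (List.nil_prefix ..)
  | cons y v ih =>
    cases v' with
    | nil => exact .inr (List.nil_prefix ..)
    | cons y' v' =>
      rw [List.isChain_cons_cons] at hv hv'
      obtain ⟨⟨hxy, hout, -⟩, hv⟩ := hv
      obtain ⟨⟨hxy', -⟩, hv'⟩ := hv'
      obtain rfl : y = y' := hout.unique hxy.symm hxy'.symm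
      simpa only [List.cons_prefix_cons, true_and] using ih hv hv'

lemma suffix_or_suffix_of_isChain_unbranchedStep {x : A} {u u' : List A}
    (hu : (u ++ [x]).IsChain (UnbranchedStep s t))
    (hu' : (u' ++ [x]).IsChain (UnbranchedStep s t)) :
    u <:+ u' ∨ u' <:+ u := by
  have hr := isChain_unbranchedStep_reverse hu
  have hr' := isChain_unbranchedStep_reverse hu'
  rw [List.reverse_append, List.reverse_singleton, List.singleton_append] at hr hr'
  simpa only [List.reverse_prefix] using prefix_or_prefix_of_isChain_unbranchedStep hr hr'

lemma append_cons_infix_append_cons {u U v W : List A} {b : A} (hu : u <:+ U) (hv : v <+: W) :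
    u ++ b :: v <:+: U ++ b :: W := by
  obtain ⟨w, rfl⟩ := hu
  obtain ⟨z, rfl⟩ := hv
  exact ⟨w, z, by simp⟩

lemma exists_isChain_unbranchedStep_infix_infix {b : A} {p q : List A}
    (hp : p.IsChain (UnbranchedStep s t)) (hq : q.IsChain (UnbranchedStep s t))
    (hbp : [b] <:+: p) (hbq : [b] <:+: q) :
    ∃ m, m.IsChain (UnbranchedStep s t) ∧ p <:+: m ∧ q <:+: m := by
  obtain ⟨u, v, rfl⟩ := hbp
  obtain ⟨u', v', rfl⟩ := hbq
  simp only [List.append_assoc, List.singleton_append] at hp hq ⊢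
  rw [List.isChain_split] at hp hq
  obtain ⟨U, hu, hu', hU⟩ :
      ∃ U, u <:+ U ∧ u' <:+ U ∧ (U ++ [b]).IsChain (UnbranchedStep s t) := by
    rcases suffix_or_suffix_of_isChain_unbranchedStep hp.1 hq.1 with h | h
    · exact ⟨u', h, List.suffix_refl _, hq.1⟩
    · exact ⟨u, List.suffix_refl _, h, hp.1⟩
  obtain ⟨W, hv, hv', hW⟩ :
      ∃ W, v <+: W ∧ v' <+: W ∧ (b :: W).IsChain (UnbranchedStep s t) := by
    rcases prefix_or_prefix_of_isChain_unbranchedStep hp.2 hq.2 with h | h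
    · exact ⟨v', h, List.prefix_refl _, hq.2⟩
    · exact ⟨v, List.prefix_refl _, h, hp.2⟩
  exact ⟨U ++ b :: W, List.isChain_split.mpr ⟨hU, hW⟩, append_cons_infix_append_cons hu hv,
    append_cons_infix_append_cons hu' hv'⟩

lemma eq_of_infix_of_forall_length_le {c : A} {p m : List A}
    (hp : p ∈ Phi s t c) (hmax : ∀ q ∈ Phi s t c, q.length ≤ p.length)
    (hm : m.IsChain (UnbranchedStep s t)) (hpm : p <:+: m) : p = m := by
  have hmΦ : m ∈ Phi s t c := mem_Phi_iff.mpr ⟨(mem_Phi_iff.mp hp).1.trans hpm, hm⟩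
  exact hpm.sublist.eq_of_length (le_antisymm hpm.length_le (hmax m hmΦ))

end

theorem stmt_2_general (s t : A → V) (ω : A → List A) (hω : OmegaSpec s t ω) (a b : A) :
    [b] <:+: ω a ↔ ω a = ω b := by
  by_cases hcyc : IsCyclicQuiver s t
  · obtain ⟨p, -, -, hall, -, hωp⟩ := hω.1 hcyc
    rw [hωp a, hωp b, List.singleton_infix_iff]
    exact iff_of_true (hall b) rfl
  obtain ⟨ha, hamax⟩ := hω.2 hcyc a
  obtain ⟨hb, hbmax⟩ := hω.2 hcyc b
  obtain ⟨hb_self, hb_chain⟩ := mem_Phi_iff.mp hb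
  refine ⟨fun hba => ?_, fun h => h ▸ hb_self⟩
  obtain ⟨m, hm, ham, hbm⟩ := exists_isChain_unbranchedStep_infix_infix
    (mem_Phi_iff.mp ha).2 hb_chain hba hb_self
  rw [eq_of_infix_of_forall_length_le ha hamax hm ham,
    eq_of_infix_of_forall_length_le hb hbmax hm hbm]

/-- for arrows `a, b` of a finite (connected) quiver, `b` is a subpath of
`ω_a` if and only if `ω_a = ω_b`. -/
theorem stmt_2 [Fintype V] [Fintype A] (s t : A → V)
    (hconn : QConnected s t) (ω : A → List A) (hω : OmegaSpec s t ω) (a b : A) :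
    [b] <:+: ω a ↔ ω a = ω b :=
  stmt_2_general s t ω hω a b

end UMPPaper
end

section
/- Let A = kQ/I be a bound quiver algebra and u a non-trivial path in Q such that no path of the form ω_a^{l_a} ω_b^0 lying in I divides u (where ω_a^{l_a} denotes the last arrow of ω_a and ω_b^0 the first arrow of ω_b). Then u is a path of Q_N for exactly one weakly connected component N of the ramifications graph G_{Q,I}. -/
namespace UMPPaper

variable {V A : Type}

/-! ## Bound quiver algebras: the ideal `I` is abstracted by the set `Zi` of paths lying in it. -/

/-- The set of paths lying in a (two-sided) ideal is closed under taking super-paths. -/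
def ZeroClosed (Zi : List A → Prop) : Prop :=
  ∀ p q : List A, Zi p → p <:+: q → Zi q

/-- Path-level content of admissibility: `I ⊆ R², Rᵐ ⊆ I` for some `m ≥ 2`. -/
def Admissible (s t : A → V) (Zi : List A → Prop) : Prop :=
  (∀ p : List A, Zi p → 2 ≤ p.length) ∧
  ∃ m : ℕ, 2 ≤ m ∧ ∀ p : List A, IsPath s t p → m ≤ p.length → Zi p

/-- `t(p) = s(q)` and the junction (last arrow of `p`)·(first arrow of `q`) is not in `I`. -/
def JunctionOK (s t : A → V) (Zi : List A → Prop) (p q : List A) : Prop :=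
  ∃ x ∈ p.getLast?, ∃ y ∈ q.head?, t x = s y ∧ ¬ Zi [x, y]

/-- Directed edge of the ramifications graph, on path-vertices. -/
def REdgeP (s t : A → V) (Zi : List A → Prop) (p q : List A) : Prop :=
  p ≠ q ∧ JunctionOK s t Zi p q

/-- Directed edge `ω_a → ω_b` of the ramifications graph `G_{Q,I}`. -/
def REdge (s t : A → V) (Zi : List A → Prop) (ω : A → List A) (a b : A) : Prop :=
  REdgeP s t Zi (ω a) (ω b)

/-- Undirected adjacency (including equality of vertices) used for weak connectivity. -/
def RAdj (s t : A → V) (Zi : List A → Prop) (ω : A → List A) (a b : A) : Prop :=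
  ω a = ω b ∨ REdge s t Zi ω a b ∨ REdge s t Zi ω b a

/-- `a` and `b` lie in the same weakly connected component of `G_{Q,I}`. -/
def SameComp (s t : A → V) (Zi : List A → Prop) (ω : A → List A) (a b : A) : Prop :=
  Relation.ReflTransGen (RAdj s t Zi ω) a b

/-- `N` (a set of arrows) is (the arrow set `(Q_N)₁` of) a weakly connected
component of the ramifications graph `G_{Q,I}`. -/
def IsComp (s t : A → V) (Zi : List A → Prop) (ω : A → List A) (N : Set A) : Prop :=
  ∃ a : A, N = {b | SameComp s t Zi ω a b}

/-- A path of the subquiver `Q_N`. -/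
def PathIn (s t : A → V) (N : Set A) (p : List A) : Prop :=
  IsPath s t p ∧ ∀ x ∈ p, x ∈ N

/-- `m` is (a representative of) a maximal path of `A_N = kQ_N/I_N`
(for `N = Set.univ` this is a maximal path of `A = kQ/I`). -/
def MaxPathIn (s t : A → V) (Zi : List A → Prop) (N : Set A) (m : List A) : Prop :=
  PathIn s t N m ∧ ¬ Zi m ∧
  (∀ α ∈ N, (∃ x ∈ m.getLast?, t x = s α) → Zi (m ++ [α])) ∧
  (∀ α ∈ N, (∃ x ∈ m.head?, t α = s x) → Zi (α :: m))

/-- `A_N` is a UMP algebra: any two non-disjoint maximal paths coincide. -/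
def UMPin (s t : A → V) (Zi : List A → Prop) (N : Set A) : Prop :=
  ∀ m m' : List A, MaxPathIn s t Zi N m → MaxPathIn s t Zi N m' →
    (∃ a, a ∈ m ∧ a ∈ m') → m = m'

/-- `A = kQ/I` is special multiserial: every arrow has at most one right and at
most one left arrow-extension outside `I`. -/
def SpecialMultiserial (s t : A → V) (Zi : List A → Prop) : Prop :=
  ∀ α β γ : A,
    ((t α = s β ∧ ¬ Zi [α, β]) → (t α = s γ ∧ ¬ Zi [α, γ]) → β = γ) ∧
    ((t β = s α ∧ ¬ Zi [β, α]) → (t γ = s α ∧ ¬ Zi [γ, α]) → β = γ)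

/-- `ws = [ω_0, …, ω_n]` is the enumeration of the vertices of the component `N`
in edge order; `ω(N) = ws.flatten`. -/
def CompEnum (s t : A → V) (Zi : List A → Prop) (ω : A → List A)
    (N : Set A) (ws : List (List A)) : Prop :=
  ws ≠ [] ∧ ws.Nodup ∧ (∀ p, p ∈ ws ↔ ∃ a ∈ N, ω a = p) ∧
  ws.Chain' (fun p q => JunctionOK s t Zi p q) ∧ IsPath s t ws.flatten

/-- `W^{(l)}`, the `l`-fold concatenation of `W`. -/
def cyclePow (W : List A) (l : ℕ) : List A := (List.replicate l W).flatten

/-- `R` is a minimal set of zero relations generating `I_N` (so `A_N` is monomial). -/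
def MinGen (s t : A → V) (Zi : List A → Prop) (N : Set A) (R : Set (List A)) : Prop :=
  (∀ r ∈ R, PathIn s t N r ∧ Zi r) ∧
  (∀ p, PathIn s t N p → (Zi p ↔ ∃ r ∈ R, r <:+: p)) ∧
  (∀ r ∈ R, ∀ r' ∈ R, r <:+: r' → r = r')

/-- `r` is a quadratic junction relation `ω_a^{l_a} ω_b^0` with `a, b ∈ (Q_N)₁`. -/
def IsJuncRel (ω : A → List A) (N : Set A) (r : List A) : Prop :=
  ∃ a ∈ N, ∃ b ∈ N, ∃ x ∈ (ω a).getLast?, ∃ y ∈ (ω b).head?, r = [x, y]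

/-- `S_N = R_N \ Ω_N`. -/
def SRel (ω : A → List A) (N : Set A) (R : Set (List A)) : Set (List A) :=
  {r ∈ R | ¬ IsJuncRel ω N r}

/-- The order `≤_f` on arrows given by position along `W = ω(N)`. -/
def leF (W : List A) (α β : A) : Prop :=
  ∃ u u' : List A, W = u ++ α :: u' ∧ β ∈ α :: u'

/-- The order `≤_s` on relations: comparison of first arrows. -/
def leS (W : List A) (u v : List A) : Prop :=
  ∃ x ∈ u.head?, ∃ y ∈ v.head?, leF W x y

/-- `ss = [s_1, …, s_k]` enumerates `S` in strictly increasing `≤_s` order. -/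
def SEnum (W : List A) (S : Set (List A)) (ss : List (List A)) : Prop :=
  ss.Nodup ∧ (∀ r, r ∈ ss ↔ r ∈ S) ∧ ss.Chain' (fun u v => leS W u v ∧ u ≠ v)

/-- `m` is one of the paths `m_i`, `0 ≤ i ≤ k`, of the definition of `S_N^*`.
Note that `ω_n^{l_n} ω_0^0 ∈ I_N` is expressed by `¬ JunctionOK s t Zi W W`. -/
def IsMi (s t : A → V) (Zi : List A → Prop) (W : List A)
    (ss : List (List A)) (m : List A) : Prop :=
  -- case `0 < i < k`
  (∃ p ∈ ss.zip ss.tail, ∃ u v v' : List A, ∃ x ∈ p.1.head?, ∃ y ∈ p.2.head?,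
      W = u ++ [x] ++ v ++ [y] ++ v' ∧ m = v ++ p.2.dropLast) ∨
  -- case `i = 0`, `ω_n^{l_n} ω_0^0 ∈ I_N`
  (¬ JunctionOK s t Zi W W ∧
    ∃ s1 ∈ ss.head?, ∃ u z : List A, W = u ++ s1 ++ z ∧ m = u ++ s1.dropLast) ∨
  -- case `i = k`, `ω_n^{l_n} ω_0^0 ∈ I_N`
  (¬ JunctionOK s t Zi W W ∧
    ∃ sk ∈ ss.getLast?, ∃ v z : List A, W = z ++ sk ++ v ∧ m = sk.tail ++ v) ∨
  -- case `i ∈ {0, k}`, `ω_n^{l_n} ω_0^0 ∉ I_N`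
  (JunctionOK s t Zi W W ∧
    ∃ s1 ∈ ss.head?, ∃ sk ∈ ss.getLast?, ∃ u v z z' : List A,
      ∃ x ∈ s1.head?, ∃ y ∈ sk.head?,
      W = u ++ [x] ++ z ∧ W = z' ++ [y] ++ v ∧ m = v ++ u ++ s1.dropLast)

/-- `r` is an `ω`-relation: a zero relation of length greater than two which is the
unique element of `I` dividing it. -/
def IsOmegaRel (s t : A → V) (Zi : List A → Prop) (r : List A) : Prop :=
  IsPath s t r ∧ Zi r ∧ 3 ≤ r.length ∧ ∀ r' : List A, Zi r' → r' <:+: r → r' = r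

end UMPPaper

/-! In a cyclic quiver all `ω_a` coincide. In a non-cyclic quiver, `ω_a` is a longest path through
`a` all of whose inner vertices have exactly one incoming and one outgoing arrow. Such a path is
determined by any of its arrows up to how far it is extended in each direction, so splicing two
of them at a common arrow gives another one; by maximality, `b ∈ ω_a` forces `ω_a = ω_b`. Hence
for consecutive arrows `x y` of `u`, either the vertex between them is inner to `ω_x` or `ω_y`
and `ω_x = ω_y`, or `x` ends `ω_x` and `y` starts `ω_y`, and then the hypothesis on `u` makes
`ω_x → ω_y` an edge of `G_{Q,I}`. So all arrows of `u` lie in one weakly connected component,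
which is unique since components partition the arrows. -/

namespace List

variable {α : Type*} {R : α → α → Prop}

theorem mem_dropLast_iff_exists_pair_infix {x : α} {l : List α} :
    x ∈ l.dropLast ↔ ∃ y, [x, y] <:+: l := by
  induction l with
  | nil => simp
  | cons a l ih =>
    cases l with
    | nil => simp [List.infix_cons_iff]
    | cons b l =>
      rw [dropLast_cons_cons, mem_cons, ih]
      constructor
      · rintro (rfl | ⟨y, hy⟩)
        · exact ⟨b, [], l, rfl⟩
        · exact ⟨y, infix_cons hy⟩
      · rintro ⟨y, hy⟩
        rcases infix_cons_iff.1 hy with hy | hy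
        · exact Or.inl (cons_prefix_cons.1 hy).1
        · exact Or.inr ⟨y, hy⟩

theorem exists_pair_infix_of_mem_of_notMem_head? {y : α} {l : List α} (hy : y ∈ l)
    (hh : y ∉ l.head?) : ∃ x, [x, y] <:+: l := by
  induction l with
  | nil => simp at hy
  | cons a l ih =>
    have hyl : y ∈ l := (mem_cons.1 hy).resolve_left fun h => hh (by simp [h])
    obtain ⟨b, l, rfl⟩ := exists_cons_of_ne_nil (ne_nil_of_mem hyl)
    by_cases hyb : y = b
    · exact ⟨a, [], l, by simp [hyb]⟩
    · obtain ⟨x, hx⟩ := ih hyl (by simpa [eq_comm] using hyb)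
      exact ⟨x, infix_cons hx⟩

theorem mem_getLast?_of_mem_of_notMem_dropLast {x : α} {l : List α} (hx : x ∈ l)
    (hd : x ∉ l.dropLast) : x ∈ l.getLast? :=
  not_not.1 fun h => hd (mem_dropLast_of_mem_of_ne_getLast? hx (Ne.symm h))

theorem prefix_or_prefix_of_isChain_cons {c : α} {p q : List α} (hq : IsChain R (c :: q))
    (hdet : ∀ x y z, [x, y] <:+: c :: p → R x z → y = z) : p <+: q ∨ q <+: p := by
  induction p generalizing c q with
  | nil => exact Or.inl nil_prefix
  | cons d p ih =>
    cases q with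
    | nil => exact Or.inr nil_prefix
    | cons e q =>
      obtain rfl : d = e := hdet c d e ⟨[], p, rfl⟩ (isChain_cons_cons.1 hq).1
      simpa using ih hq.tail fun x y z hxy => hdet x y z (infix_cons hxy)

theorem suffix_or_suffix_of_isChain_concat {c : α} {p q : List α} (hq : IsChain R (q ++ [c]))
    (hdet : ∀ x y z, [x, y] <:+: p ++ [c] → R z y → x = z) : p <:+ q ∨ q <:+ p := by
  have hq' : IsChain (fun a b => R b a) (c :: q.reverse) := by
    simpa using isChain_reverse.2 hq
  have := prefix_or_prefix_of_isChain_cons (p := p.reverse) hq' fun x y z hxy hz =>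
    hdet y x z (by simpa using reverse_infix.2 hxy) hz
  simpa using this

theorem IsChain.splice {c : α} {p₁ p₂ q₁ q₂ : List α} (hp : IsChain R (p₁ ++ c :: p₂))
    (hq : IsChain R (q₁ ++ c :: q₂)) : IsChain R (q₁ ++ c :: p₂) := by
  rw [isChain_append] at hp hq ⊢
  exact ⟨hq.1, hp.2.1, fun x hx y hy => hq.2.2 x hx y (by simpa using hy)⟩

theorem mem_dropLast_splice {x c : α} {p₁ p₂ q₁ q₂ : List α}
    (hx : x ∈ (q₁ ++ c :: p₂).dropLast) :
    x ∈ (q₁ ++ c :: q₂).dropLast ∨ x ∈ (p₁ ++ c :: p₂).dropLast := by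
  simp only [dropLast_append_of_ne_nil (cons_ne_nil _ _), mem_append] at hx ⊢
  tauto

end List

namespace UMPPaper

variable {V A : Type}

theorem IsPath.tgt_eq_src_of_infix {s t : A → V} {p : List A} (hp : IsPath s t p) {x y : A}
    (h : [x, y] <:+: p) : t x = s y :=
  (List.isChain_pair (R := fun a b => t a = s b)).1 ((hp.2 : List.IsChain _ p).infix h)

section Phi

variable {s t : A → V} {a b c : A} {p p₁ p₂ q₁ q₂ : List A}

theorem Phi.isChain (hp : p ∈ Phi s t a) : List.IsChain (fun x y => t x = s y) p := hp.1.2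

theorem Phi.mem (hp : p ∈ Phi s t a) : a ∈ p := (List.singleton_infix_iff _ _).1 hp.2.1

theorem Phi.next_unique (hp : p ∈ Phi s t a) {x y z : A} (hxy : [x, y] <:+: p)
    (hz : t x = s z) : y = z := by
  obtain ⟨_, -, huniq⟩ := (hp.2.2 x (List.mem_dropLast_iff_exists_pair_infix.2 ⟨y, hxy⟩)).1
  have hy : t x = s y := hp.1.tgt_eq_src_of_infix hxy
  exact (huniq y hy.symm).trans (huniq z hz.symm).symm

theorem Phi.prev_unique (hp : p ∈ Phi s t a) {x y z : A} (hxy : [x, y] <:+: p)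
    (hz : t z = s y) : x = z := by
  obtain ⟨_, -, huniq⟩ := (hp.2.2 x (List.mem_dropLast_iff_exists_pair_infix.2 ⟨y, hxy⟩)).2
  have hy : t x = s y := hp.1.tgt_eq_src_of_infix hxy
  exact (huniq x rfl).trans (huniq z (hz.trans hy.symm)).symm

theorem Phi.prefix_or_prefix (hp : p₁ ++ c :: p₂ ∈ Phi s t a)
    (hq : q₁ ++ c :: q₂ ∈ Phi s t b) : p₂ <+: q₂ ∨ q₂ <+: p₂ :=
  List.prefix_or_prefix_of_isChain_cons
    ((Phi.isChain hq).infix (List.suffix_append _ _).isInfix)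
    fun _ _ _ hxy => Phi.next_unique hp (hxy.trans (List.suffix_append _ _).isInfix)

theorem Phi.suffix_or_suffix (hp : p₁ ++ c :: p₂ ∈ Phi s t a)
    (hq : q₁ ++ c :: q₂ ∈ Phi s t b) : p₁ <:+ q₁ ∨ q₁ <:+ p₁ :=
  List.suffix_or_suffix_of_isChain_concat (c := c)
    ((Phi.isChain hq).infix ⟨[], q₂, by simp⟩)
    fun _ _ _ hxy => Phi.prev_unique hp (hxy.trans ⟨[], p₂, by simp⟩)

theorem Phi.splice (hp : p₁ ++ c :: p₂ ∈ Phi s t a) (hq : q₁ ++ c :: q₂ ∈ Phi s t b) :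
    q₁ ++ c :: p₂ ∈ Phi s t c :=
  ⟨⟨by simp, (Phi.isChain hp).splice (Phi.isChain hq)⟩,
    (List.singleton_infix_iff _ _).2 (by simp),
    fun x hx => (List.mem_dropLast_splice hx).elim (hq.2.2 x) (hp.2.2 x)⟩

end Phi

variable {s t : A → V} {Zi : List A → Prop} {ω : A → List A}

theorem omega_eq_of_mem
    (hω : ∀ a, ω a ∈ Phi s t a ∧ ∀ q ∈ Phi s t a, q.length ≤ (ω a).length)
    {a b : A} (hb : b ∈ ω a) : ω a = ω b := by
  obtain ⟨p₁, p₂, hp⟩ := List.append_of_mem hb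
  obtain ⟨q₁, q₂, hq⟩ := List.append_of_mem (Phi.mem (hω b).1)
  have hpΦ : p₁ ++ b :: p₂ ∈ Phi s t a := hp ▸ (hω a).1
  have hqΦ : q₁ ++ b :: q₂ ∈ Phi s t b := hq ▸ (hω b).1
  have hmax : ∀ r ∈ Phi s t b, r.length ≤ (q₁ ++ b :: q₂).length := hq ▸ (hω b).2
  have hlen₂ : p₂.length ≤ q₂.length := by simpa using hmax _ (Phi.splice hpΦ hqΦ)
  have hlen₁ : p₁.length ≤ q₁.length := by simpa using hmax _ (Phi.splice hqΦ hpΦ)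
  have hpre : p₂ <+: q₂ := (Phi.prefix_or_prefix hpΦ hqΦ).elim id fun h =>
    h.eq_of_length (h.length_le.antisymm hlen₂) ▸ List.prefix_refl _
  have hsuf : p₁ <:+ q₁ := (Phi.suffix_or_suffix hpΦ hqΦ).elim id fun h =>
    h.eq_of_length (h.length_le.antisymm hlen₁) ▸ List.suffix_refl _
  have hsub : (ω a).Sublist (ω b) := hp ▸ hq ▸ hsuf.sublist.append (hpre.sublist.cons_cons b)
  have hbΦa : ω b ∈ Phi s t a :=
    ⟨(hω b).1.1, (List.singleton_infix_iff _ _).2 (hsub.subset (Phi.mem (hω a).1)),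
      (hω b).1.2.2⟩
  exact hsub.eq_of_length_le ((hω a).2 _ hbΦa)

theorem rAdj_of_tgt_eq_src (hω : OmegaSpec s t ω) {x y : A} (hxy : t x = s y)
    (hjunc : x ∈ (ω x).getLast? → y ∈ (ω y).head? → ¬ Zi [x, y]) : RAdj s t Zi ω x y := by
  by_cases hcyc : IsCyclicQuiver s t
  · obtain ⟨p, -, -, -, -, hconst⟩ := hω.1 hcyc
    exact Or.inl ((hconst x).trans (hconst y).symm)
  have hmax := hω.2 hcyc
  by_cases hxl : x ∈ (ω x).dropLast
  · obtain ⟨d, hxd⟩ := List.mem_dropLast_iff_exists_pair_infix.1 hxl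
    obtain rfl : d = y := Phi.next_unique (hmax x).1 hxd hxy
    exact Or.inl (omega_eq_of_mem hmax (hxd.subset (by simp)))
  have hxlast : x ∈ (ω x).getLast? :=
    List.mem_getLast?_of_mem_of_notMem_dropLast (Phi.mem (hmax x).1) hxl
  by_cases hyh : y ∈ (ω y).head?
  · by_cases heq : ω x = ω y
    · exact Or.inl heq
    · exact Or.inr (Or.inl ⟨heq, x, hxlast, y, hyh, hxy, hjunc hxlast hyh⟩)
  obtain ⟨e, hey⟩ := List.exists_pair_infix_of_mem_of_notMem_head? (Phi.mem (hmax y).1) hyh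
  obtain rfl : e = x := Phi.prev_unique (hmax y).1 hey hxy
  exact Or.inl (omega_eq_of_mem hmax (hey.subset (by simp))).symm

theorem isChain_rAdj (hω : OmegaSpec s t ω) {u : List A} (hu : IsPath s t u)
    (hnj : ∀ a b : A, ∀ x ∈ (ω a).getLast?, ∀ y ∈ (ω b).head?,
      Zi [x, y] → ¬ ([x, y] <:+: u)) :
    List.IsChain (RAdj s t Zi ω) u :=
  List.isChain_iff_forall_rel_of_append_cons_cons.2 fun x y l₁ l₂ hu' => by
    have hxy : [x, y] <:+: u := ⟨l₁, l₂, by simp [hu']⟩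
    exact rAdj_of_tgt_eq_src hω (hu.tgt_eq_src_of_infix hxy)
      fun hx hy hz => hnj x y x hx y hy hz hxy

theorem rAdj_symm {a b : A} (h : RAdj s t Zi ω a b) : RAdj s t Zi ω b a := by
  rcases h with h | h | h
  exacts [Or.inl h.symm, Or.inr (Or.inr h), Or.inr (Or.inl h)]

theorem SameComp.symm {a b : A} (h : SameComp s t Zi ω a b) : SameComp s t Zi ω b a :=
  Relation.reflTransGen_swap.1 (Relation.ReflTransGen.mono (fun _ _ => rAdj_symm) _ _ h)

theorem IsComp.eq_setOf_of_mem {N : Set A} (hN : IsComp s t Zi ω N) {a : A} (ha : a ∈ N) :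
    N = {b | SameComp s t Zi ω a b} := by
  obtain ⟨a', rfl⟩ := hN
  ext b
  exact ⟨fun h => Relation.ReflTransGen.trans (SameComp.symm ha) h,
    fun h => Relation.ReflTransGen.trans ha h⟩

theorem stmt_5_general (s t : A → V) (Zi : List A → Prop)
    (ω : A → List A) (hω : OmegaSpec s t ω)
    (u : List A) (hu : IsPath s t u)
    (hnj : ∀ a b : A, ∀ x ∈ (ω a).getLast?, ∀ y ∈ (ω b).head?,
      Zi [x, y] → ¬ ([x, y] <:+: u)) :
    ∃! N : Set A, IsComp s t Zi ω N ∧ PathIn s t N u := by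
  obtain ⟨a₀, l, rfl⟩ := List.exists_cons_of_ne_nil hu.1
  have hconn : ∀ x ∈ a₀ :: l, SameComp s t Zi ω a₀ x :=
    (isChain_rAdj hω hu hnj).induction _ _ (fun _ _ hxy hx => hx.tail hxy) fun _ => .refl
  refine ⟨{b | SameComp s t Zi ω a₀ b}, ⟨⟨a₀, rfl⟩, hu, hconn⟩, ?_⟩
  rintro N ⟨hN, -, hmem⟩
  exact hN.eq_setOf_of_mem (hmem a₀ List.mem_cons_self)

/-- if `u` is a non-trivial path such that no junction
`ω_a^{l_a} ω_b^0` lying in `I` divides `u`, then `u` is a path of `Q_N` for exactly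
one weakly connected component `N` of `G_{Q,I}`. -/
theorem stmt_5 [Fintype V] [Fintype A] (s t : A → V) (Zi : List A → Prop)
    (ω : A → List A) (hω : OmegaSpec s t ω)
    (hZ : ZeroClosed Zi) (hadm : Admissible s t Zi)
    (u : List A) (hu : IsPath s t u)
    (hnj : ∀ a b : A, ∀ x ∈ (ω a).getLast?, ∀ y ∈ (ω b).head?,
      Zi [x, y] → ¬ ([x, y] <:+: u)) :
    ∃! N : Set A, IsComp s t Zi ω N ∧ PathIn s t N u :=
  stmt_5_general s t Zi ω hω u hu hnj

end UMPPaper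
end

section
/- Let A = kQ/I be a special multiserial algebra. Then every weakly connected component N of the ramifications graph G_{Q,I} is either a directed path ω_0 → ω_1 → ⋯ → ω_n or a directed cycle ω_0 → ω_1 → ⋯ → ω_n → ω_0, for some n ≥ 0. In particular, every vertex of G_{Q,I} has in-degree at most 1 and out-degree at most 1. -/
/-!
Outside the cyclic case, where `ω` is constant, `ω_a` is a longest path of `Φ_a`. Two paths of `Φ`
starting (ending) with the same arrow are comparable as prefixes (suffixes), because their interior
vertices have a unique outgoing (incoming) arrow; so two longest such paths coincide. Special
multiseriality pins down the first arrow of every out-neighbour of `ω_a` and the last arrow of every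
in-neighbour, so all in- and out-degrees of `G_{Q,I}` are at most one. A finite weakly connected
digraph with this property is a directed path or cycle: a longest simple path through a fixed vertex
is closed under taking neighbours, hence exhausts the component, and the only edge that can join
two of its vertices other than consecutive ones is the one closing it up.
-/

namespace List
variable {X : Type} {R : X → X → Prop}

theorem mem_dropLast_of_infix_pair {x y : X} {l : List X} (h : [x, y] <:+: l) :
    x ∈ l.dropLast := by
  obtain ⟨l₁, l₂, rfl⟩ := h
  simp [dropLast_append_of_ne_nil]

theorem IsChain.prefix_or_prefix :
    ∀ {p q : List X}, p.IsChain R → q.IsChain R → p.head? = q.head? →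
      (∀ x b c, [x, b] <:+: p → R x c → b = c) → p <+: q ∨ q <+: p
  | [], _, _, _, _, _ => .inl nil_prefix
  | _, [], _, _, _, _ => .inr nil_prefix
  | [a], b :: q, _, _, h, _ => .inl (by cases h; exact prefix_cons_inj a |>.mpr nil_prefix)
  | a :: a' :: p, [b], _, _, h, _ => .inr (by cases h; exact prefix_cons_inj a |>.mpr nil_prefix)
  | a :: a' :: p, b :: b' :: q, hp, hq, h, huniq => by
    cases h
    obtain rfl : a' = b' := huniq a a' b' ⟨[], p, rfl⟩ (isChain_cons_cons.mp hq).1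
    have := IsChain.prefix_or_prefix (p := a' :: p) (q := a' :: q) hp.tail hq.tail rfl
      fun x b c hxb => huniq x b c (infix_cons hxb)
    simpa only [prefix_cons_inj] using this

theorem IsChain.suffix_or_suffix {p q : List X} (hp : p.IsChain R) (hq : q.IsChain R)
    (h : p.getLast? = q.getLast?) (huniq : ∀ x b c, [b, x] <:+: p → R c x → b = c) :
    p <:+ q ∨ q <:+ p := by
  have := IsChain.prefix_or_prefix (R := flip R) (isChain_reverse.mpr hp)
    (isChain_reverse.mpr hq) (by simpa [head?_reverse] using h)
    fun x b c hxb => huniq x b c (reverse_infix.mp (by simpa using hxb))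
  simpa only [reverse_prefix] using this

end List

theorem Fin.path_or_cycle_of_unique_adj {n : ℕ} (R : Fin (n + 1) → Fin (n + 1) → Prop)
    (hout : ∀ i j k, R i j → R i k → j = k) (hin : ∀ i j k, R j i → R k i → j = k)
    (hsucc : ∀ i j : Fin (n + 1), (i : ℕ) + 1 = j → R i j) :
    (∀ i j, R i j ↔ (i : ℕ) + 1 = j) ∨ (∀ i j, R i j ↔ ((i : ℕ) + 1) % (n + 1) = j) := by
  have succ_or_wrap : ∀ i j, R i j → (i : ℕ) + 1 = j ∨ (i = Fin.last n ∧ j = 0) := by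
    intro i j h
    by_cases hj : (j : ℕ) = 0
    · refine .inr ⟨by_contra fun hi => ?_, Fin.ext hj⟩
      have hlt := Fin.val_lt_last hi
      have := hout i j ⟨i + 1, by omega⟩ h (hsucc _ _ rfl)
      simp only [Fin.ext_iff] at this
      omega
    · have := hin j i ⟨j - 1, by omega⟩ h (hsucc _ _ (by dsimp only; omega))
      simp only [Fin.ext_iff] at this
      omega
  by_cases hwrap : R (Fin.last n) 0
  · refine .inr fun i j => ⟨fun h => ?_, fun h => ?_⟩
    · rcases succ_or_wrap i j h with h | ⟨rfl, rfl⟩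
      · rw [Nat.mod_eq_of_lt (h ▸ j.isLt), h]
      · simp
    · by_cases hi : i = Fin.last n
      · subst hi
        obtain rfl : j = 0 := Fin.ext (by simpa using h.symm)
        exact hwrap
      · have := Fin.val_lt_last hi
        exact hsucc i j (by rwa [Nat.mod_eq_of_lt (by omega)] at h)
  · refine .inl fun i j => ⟨fun h => ?_, hsucc i j⟩
    rcases succ_or_wrap i j h with h | ⟨rfl, rfl⟩
    exacts [h, absurd h hwrap]

namespace UMPPaper

section NodupChain

variable {X : Type} (E : X → X → Prop) (T : Set X)

def IsNodupChainIn (L : List X) : Prop :=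
  L.Nodup ∧ L.IsChain E ∧ ∀ x ∈ L, x ∈ T

variable {E T}

theorem IsNodupChainIn.length_le {L : List X} (hT : T.Finite) (hL : IsNodupChainIn E T L) :
    L.length ≤ hT.toFinset.card := by
  classical
  rw [← List.toFinset_card_of_nodup hL.1]
  exact Finset.card_le_card fun x hx => by simpa using hL.2.2 x (by simpa using hx)

theorem IsNodupChainIn.append_singleton {L : List X} {q : X} (hL : IsNodupChainIn E T L)
    (hqT : q ∈ T) (hqL : q ∉ L) (hE : ∀ x ∈ L.getLast?, E x q) :
    IsNodupChainIn E T (L ++ [q]) :=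
  ⟨hL.1.append (List.nodup_singleton q) (by simpa using hqL),
    List.isChain_append.mpr ⟨hL.2.1, List.isChain_singleton q, by simpa using hE⟩,
    by simpa [or_imp, forall_and] using ⟨hL.2.2, hqT⟩⟩

theorem IsNodupChainIn.cons {L : List X} {q : X} (hL : IsNodupChainIn E T L)
    (hqT : q ∈ T) (hqL : q ∉ L) (hE : ∀ x ∈ L.head?, E q x) :
    IsNodupChainIn E T (q :: L) :=
  ⟨List.nodup_cons.mpr ⟨hqL, hL.1⟩, List.isChain_cons.mpr ⟨hE, hL.2.1⟩,
    by simpa [or_imp, forall_and] using ⟨hqT, hL.2.2⟩⟩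

theorem exists_longest_nodupChainIn (hT : T.Finite) {x₀ : X} (hx₀ : x₀ ∈ T) :
    ∃ L, x₀ ∈ L ∧ IsNodupChainIn E T L ∧
      ∀ L', x₀ ∈ L' → IsNodupChainIn E T L' → L'.length ≤ L.length := by
  classical
  let P k := ∃ L, x₀ ∈ L ∧ IsNodupChainIn E T L ∧ L.length = k
  have hP1 : P 1 := ⟨[x₀], by simp, ⟨by simp, by simp, by simpa using hx₀⟩, rfl⟩
  have h1 : 1 ≤ hT.toFinset.card := hP1.choose_spec.2.2 ▸ hP1.choose_spec.2.1.length_le hT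
  obtain ⟨L, hx₀L, hL, hlen⟩ := Nat.findGreatest_spec h1 hP1
  exact ⟨L, hx₀L, hL, fun L' hx₀L' hL' =>
    hlen ▸ Nat.le_findGreatest (hL'.length_le hT) ⟨L', hx₀L', hL', rfl⟩⟩

theorem IsNodupChainIn.mem_of_adj_of_longest {L : List X} {x₀ c d : X}
    (hL : IsNodupChainIn E T L)
    (hmax : ∀ L', x₀ ∈ L' → IsNodupChainIn E T L' → L'.length ≤ L.length) (hx₀ : x₀ ∈ L)
    (hout : ∀ p ∈ T, ∀ q ∈ T, ∀ r ∈ T, E p q → E p r → q = r)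
    (hin : ∀ p ∈ T, ∀ q ∈ T, ∀ r ∈ T, E q p → E r p → q = r)
    (hc : c ∈ L) (hd : d ∈ T) (hE : E c d ∨ E d c) : d ∈ L := by
  by_contra hdL
  obtain ⟨i, hi, rfl⟩ := List.getElem_of_mem hc
  have hchain := List.isChain_iff_getElem.mp hL.2.1
  rcases hE with hE | hE
  · by_cases hnext : i + 1 < L.length
    · obtain rfl := hout _ (hL.2.2 _ hc) _ hd _ (hL.2.2 _ (List.getElem_mem hnext)) hE
        (hchain i hnext)
      exact hdL (List.getElem_mem hnext)
    · have hext := hL.append_singleton hd hdL fun x hx => by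
        obtain rfl : x = L[i] := by
          rw [List.getLast?_eq_getElem?, Option.mem_def, List.getElem?_eq_getElem (by omega)] at hx
          simpa [show L.length - 1 = i by omega] using hx.symm
        exact hE
      simpa using hmax _ (List.mem_append_left _ hx₀) hext
  · by_cases hprev : i = 0
    · subst hprev
      have hext := hL.cons hd hdL fun x hx => by
        obtain rfl : x = L[0] := by
          simpa [List.head?_eq_getElem?, List.getElem?_eq_getElem hi] using hx.symm
        exact hE
      simpa using hmax _ (List.mem_cons_of_mem _ hx₀) hext
    · have hi' : i - 1 + 1 < L.length := by omega
      have := hchain (i - 1) hi'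
      simp only [show i - 1 + 1 = i by omega] at this
      obtain rfl := hin _ (hL.2.2 _ hc) _ hd _ (hL.2.2 _ (List.getElem_mem (by omega))) hE this
      exact hdL (List.getElem_mem _)

theorem exists_enum_path_or_cycle (hT : T.Finite) {x₀ : X} (hx₀ : x₀ ∈ T)
    (hout : ∀ p ∈ T, ∀ q ∈ T, ∀ r ∈ T, E p q → E p r → q = r)
    (hin : ∀ p ∈ T, ∀ q ∈ T, ∀ r ∈ T, E q p → E r p → q = r)
    (hconn : ∀ q ∈ T, Relation.ReflTransGen (fun x y => y ∈ T ∧ (E x y ∨ E y x)) x₀ q) :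
    ∃ (n : ℕ) (w : Fin (n + 1) → X), Function.Injective w ∧ (∀ p, p ∈ T ↔ ∃ i, p = w i) ∧
      ((∀ i j : Fin (n + 1), E (w i) (w j) ↔ (i : ℕ) + 1 = j) ∨
       (∀ i j : Fin (n + 1), E (w i) (w j) ↔ ((i : ℕ) + 1) % (n + 1) = j)) := by
  obtain ⟨L, hx₀L, hL, hmax⟩ := exists_longest_nodupChainIn (E := E) hT hx₀
  have hmemT : ∀ x, x ∈ T ↔ x ∈ L := fun x => ⟨fun hx => by
    have hx₀x := hconn x hx
    clear hx
    induction hx₀x with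
    | refl => exact hx₀L
    | tail _ hcd ih => exact hL.mem_of_adj_of_longest hmax hx₀L hout hin ih hcd.1 hcd.2,
    hL.2.2 x⟩
  obtain ⟨n, hn⟩ : ∃ n, L.length = n + 1 := ⟨L.length - 1, by
    have := List.length_pos_of_mem hx₀L; omega⟩
  let w : Fin (n + 1) → X := fun i => L[i]
  have hw : Function.Injective w := fun i j hij =>
    Fin.ext (by simpa using (hL.1.getElem_inj_iff).mp hij)
  have hwT : ∀ i, w i ∈ T := fun i => hL.2.2 _ (List.getElem_mem _)
  refine ⟨n, w, hw, fun p => ?_, Fin.path_or_cycle_of_unique_adj _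
    (fun i j k hj hk => hw (hout _ (hwT i) _ (hwT j) _ (hwT k) hj hk))
    (fun i j k hj hk => hw (hin _ (hwT i) _ (hwT j) _ (hwT k) hj hk))
    (fun i j hij => ?_)⟩
  · rw [hmemT, List.mem_iff_getElem]
    exact ⟨fun ⟨i, hi, hp⟩ => ⟨⟨i, by omega⟩, hp.symm⟩, fun ⟨i, hp⟩ => ⟨i, by omega, hp.symm⟩⟩
  · have := List.isChain_iff_getElem.mp hL.2.1 i (by omega)
    simpa [w, hij] using this

end NodupChain

variable {V A : Type}

section Phi

variable (s t : A → V)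

theorem mem_phi_of_infix {b c : A} {p q : List A} (hp : p ∈ Phi s t b) (hq : q ∈ Phi s t c)
    (hpq : p <:+: q) : q ∈ Phi s t b :=
  ⟨hq.1, hp.2.1.trans hpq, hq.2.2⟩

theorem eq_of_infix_of_longest_phi {b c : A} {p q : List A}
    (hp : p ∈ Phi s t b ∧ ∀ r ∈ Phi s t b, r.length ≤ p.length) (hq : q ∈ Phi s t c)
    (hpq : p <:+: q) : p = q :=
  hpq.eq_of_length (le_antisymm hpq.length_le (hp.2 q (mem_phi_of_infix s t hp.1 hq hpq)))

variable {s t}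

theorem eq_of_longest_phi_of_head?_eq {b c : A} {p q : List A}
    (hp : p ∈ Phi s t b ∧ ∀ r ∈ Phi s t b, r.length ≤ p.length)
    (hq : q ∈ Phi s t c ∧ ∀ r ∈ Phi s t c, r.length ≤ q.length) (hpq : p.head? = q.head?) :
    p = q := by
  have hsucc : ∀ x y z, [x, y] <:+: p → t x = s z → y = z := fun x y z hxy hxz =>
    have hxy' : t x = s y := List.isChain_cons_cons.mp (hp.1.1.2.infix hxy) |>.1
    (hp.1.2.2 x (List.mem_dropLast_of_infix_pair hxy)).1.unique hxy'.symm hxz.symm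
  rcases hp.1.1.2.prefix_or_prefix hq.1.1.2 hpq hsucc with h | h
  exacts [eq_of_infix_of_longest_phi s t hp hq.1 h.isInfix,
    (eq_of_infix_of_longest_phi s t hq hp.1 h.isInfix).symm]

theorem eq_of_longest_phi_of_getLast?_eq {b c : A} {p q : List A}
    (hp : p ∈ Phi s t b ∧ ∀ r ∈ Phi s t b, r.length ≤ p.length)
    (hq : q ∈ Phi s t c ∧ ∀ r ∈ Phi s t c, r.length ≤ q.length) (hpq : p.getLast? = q.getLast?) :
    p = q := by
  have hpred : ∀ x y z, [y, x] <:+: p → t z = s x → y = z := fun x y z hyx hzx =>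
    have hyx' : t y = s x := List.isChain_cons_cons.mp (hp.1.1.2.infix hyx) |>.1
    (hp.1.2.2 y (List.mem_dropLast_of_infix_pair hyx)).2.unique rfl (hzx.trans hyx'.symm)
  rcases hp.1.1.2.suffix_or_suffix hq.1.1.2 hpq hpred with h | h
  exacts [eq_of_infix_of_longest_phi s t hp hq.1 h.isInfix,
    (eq_of_infix_of_longest_phi s t hq hp.1 h.isInfix).symm]

end Phi

section RamificationsGraph

variable {s t : A → V} {Zi : List A → Prop} {ω : A → List A}

theorem REdge.omega_eq_of_same_source (hω : OmegaSpec s t ω) (hsm : SpecialMultiserial s t Zi)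
    {a b c : A} (hab : REdge s t Zi ω a b) (hac : REdge s t Zi ω a c) : ω b = ω c := by
  by_cases hcyc : IsCyclicQuiver s t
  · obtain ⟨p, -, -, -, -, hωp⟩ := hω.1 hcyc
    rw [hωp b, hωp c]
  obtain ⟨-, x, hx, y, hy, hxy, hxyZ⟩ := hab
  obtain ⟨-, x', hx', y', hy', hxy', hxyZ'⟩ := hac
  obtain rfl := Option.mem_unique hx hx'
  obtain rfl := (hsm x y y').1 ⟨hxy, hxyZ⟩ ⟨hxy', hxyZ'⟩
  exact eq_of_longest_phi_of_head?_eq (hω.2 hcyc b) (hω.2 hcyc c) (hy.trans hy'.symm)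

theorem REdge.omega_eq_of_same_target (hω : OmegaSpec s t ω) (hsm : SpecialMultiserial s t Zi)
    {a b c : A} (hba : REdge s t Zi ω b a) (hca : REdge s t Zi ω c a) : ω b = ω c := by
  by_cases hcyc : IsCyclicQuiver s t
  · obtain ⟨p, -, -, -, -, hωp⟩ := hω.1 hcyc
    rw [hωp b, hωp c]
  obtain ⟨-, x, hx, y, hy, hxy, hxyZ⟩ := hba
  obtain ⟨-, x', hx', y', hy', hxy', hxyZ'⟩ := hca
  obtain rfl := Option.mem_unique hy hy'
  obtain rfl := (hsm y x x').2 ⟨hxy, hxyZ⟩ ⟨hxy', hxyZ'⟩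
  exact eq_of_longest_phi_of_getLast?_eq (hω.2 hcyc b) (hω.2 hcyc c) (hx.trans hx'.symm)

theorem reflTransGen_omega_of_sameComp {a₀ b : A} (h : SameComp s t Zi ω a₀ b) :
    Relation.ReflTransGen
      (fun p q => q ∈ ω '' {c | SameComp s t Zi ω a₀ c} ∧ (REdgeP s t Zi p q ∨ REdgeP s t Zi q p))
      (ω a₀) (ω b) := by
  induction h with
  | refl => exact .refl
  | tail hac hcd ih =>
    rcases hcd with hcd | hcd | hdc
    · rwa [← hcd]
    · exact ih.tail ⟨⟨_, hac.tail (.inr (.inl hcd)), rfl⟩, .inl hcd⟩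
    · exact ih.tail ⟨⟨_, hac.tail (.inr (.inr hdc)), rfl⟩, .inr hdc⟩

end RamificationsGraph

theorem stmt_8_general [Fintype A] (s t : A → V) (Zi : List A → Prop)
    (ω : A → List A) (hω : OmegaSpec s t ω)
    (hsm : SpecialMultiserial s t Zi) :
    (∀ N : Set A, IsComp s t Zi ω N →
      ∃ (n : ℕ) (w : Fin (n + 1) → List A), Function.Injective w ∧
        (∀ p : List A, (∃ a ∈ N, ω a = p) ↔ ∃ i, p = w i) ∧
        ((∀ i j : Fin (n + 1), REdgeP s t Zi (w i) (w j) ↔ (i : ℕ) + 1 = (j : ℕ)) ∨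
         (∀ i j : Fin (n + 1), REdgeP s t Zi (w i) (w j) ↔ ((i : ℕ) + 1) % (n + 1) = (j : ℕ)))) ∧
    (∀ a b c : A, REdge s t Zi ω a b → REdge s t Zi ω a c → ω b = ω c) ∧
    (∀ a b c : A, REdge s t Zi ω b a → REdge s t Zi ω c a → ω b = ω c) := by
  have hout : ∀ a b c, REdge s t Zi ω a b → REdge s t Zi ω a c → ω b = ω c :=
    fun _ _ _ hab hac => hab.omega_eq_of_same_source hω hsm hac
  have hin : ∀ a b c, REdge s t Zi ω b a → REdge s t Zi ω c a → ω b = ω c :=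
    fun _ _ _ hba hca => hba.omega_eq_of_same_target hω hsm hca
  refine ⟨?_, hout, hin⟩
  rintro N ⟨a₀, rfl⟩
  exact exists_enum_path_or_cycle ((Set.finite_range ω).subset (Set.image_subset_range _ _))
    (Set.mem_image_of_mem ω (Relation.ReflTransGen.refl : SameComp s t Zi ω a₀ a₀))
    (by rintro _ ⟨a, -, rfl⟩ _ ⟨b, -, rfl⟩ _ ⟨c, -, rfl⟩; exact hout a b c)
    (by rintro _ ⟨a, -, rfl⟩ _ ⟨b, -, rfl⟩ _ ⟨c, -, rfl⟩; exact hin a b c)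
    (by rintro _ ⟨b, hb, rfl⟩; exact reflTransGen_omega_of_sameComp hb)

/-- for a special multiserial algebra, every weakly connected component of
`G_{Q,I}` is a directed path or a directed cycle; in particular every vertex of `G_{Q,I}`
has in-degree and out-degree at most 1. -/
theorem stmt_8 [Fintype V] [Fintype A] (s t : A → V) (Zi : List A → Prop)
    (ω : A → List A) (hω : OmegaSpec s t ω)
    (hZ : ZeroClosed Zi) (hadm : Admissible s t Zi)
    (hsm : SpecialMultiserial s t Zi) :
    (∀ N : Set A, IsComp s t Zi ω N →
      ∃ (n : ℕ) (w : Fin (n + 1) → List A), Function.Injective w ∧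
        (∀ p : List A, (∃ a ∈ N, ω a = p) ↔ ∃ i, p = w i) ∧
        ((∀ i j : Fin (n + 1), REdgeP s t Zi (w i) (w j) ↔ (i : ℕ) + 1 = (j : ℕ)) ∨
         (∀ i j : Fin (n + 1), REdgeP s t Zi (w i) (w j) ↔ ((i : ℕ) + 1) % (n + 1) = (j : ℕ)))) ∧
    (∀ a b c : A, REdge s t Zi ω a b → REdge s t Zi ω a c → ω b = ω c) ∧
    (∀ a b c : A, REdge s t Zi ω b a → REdge s t Zi ω c a → ω b = ω c) :=
  stmt_8_general s t Zi ω hω hsm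

end UMPPaper
end

section
/- Let A = kQ/I be a special multiserial and locally monomial algebra, and N a weakly connected component of G_{Q,I}. If S_N = ∅ (there are no relations of R_N other than the quadratic relations of the form (last arrow of ω_a)·(first arrow of ω_b) in I_N), then the set of maximal paths of A_N is exactly {ω(N) + I_N}; in particular A_N is a UMP algebra. -/
namespace UMPPaper

variable {V A : Type}

/-!
With `S_N = ∅` the ideal `I_N` is generated by paths of length two, so a path of `Q_N` is
nonzero exactly when every pair of consecutive arrows is. The path `W = ω(N)` has this
property and runs through every arrow of `Q_N` exactly once; the pairs inside an `ω_a` are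
nonzero because a junction relation starts with the last arrow of some `ω_b`, and `ω_a` is
repetition-free and equal to `ω_x` for each of its arrows `x`. Moreover `W` cannot be closed
up: otherwise its powers `W^{(l)}` would be nonzero paths of arbitrary length, contradicting
admissibility. Since every arrow has at most one nonzero successor and at most one nonzero
predecessor, a nonzero path of `Q_N` can then be laid along `W` arrow by arrow, so it is a
subpath of `W`. Hence `W` is a maximal path, and any maximal path, being a subpath of `W`
that cannot be extended, is `W` itself.
-/

section ListLemmas

variable {α : Type*}

theorem not_mem_getLast?_of_pair_infix {l : List α} {x y : α} (hl : l.Nodup)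
    (h : [x, y] <:+: l) : x ∉ l.getLast? := by
  obtain ⟨u, v, rfl⟩ := h
  intro hx
  rw [show u ++ [x, y] ++ v = (u ++ [x]) ++ y :: v by simp,
    List.getLast?_append_of_ne_nil _ (List.cons_ne_nil _ _)] at hx
  have hnd : (u ++ [x] ++ y :: v).Nodup := by simpa using hl
  exact List.disjoint_of_nodup_append hnd (by simp) (List.mem_of_mem_getLast? hx)

theorem not_mem_head?_of_pair_infix {l : List α} {x y : α} (hl : l.Nodup)
    (h : [x, y] <:+: l) : y ∉ l.head? := by
  rw [← List.getLast?_reverse]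
  exact not_mem_getLast?_of_pair_infix (List.nodup_reverse.mpr hl) (List.reverse_infix.mpr h)

theorem mem_dropLast_of_pair_infix {l : List α} {x y : α} (h : [x, y] <:+: l) :
    x ∈ l.dropLast := by
  obtain ⟨u, v, rfl⟩ := h
  rw [show u ++ [x, y] ++ v = u ++ x :: y :: v by simp, List.dropLast_append_cons]
  simp

theorem prefix_or_prefix_of_isChain {R : α → α → Prop} :
    ∀ {x : α} {v v' : List α}, (∀ z b b', [z, b] <:+: x :: v → R z b' → b' = b) →
      (x :: v').IsChain R → v <+: v' ∨ v' <+: v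
  | _, [], _, _, _ => Or.inl List.nil_prefix
  | _, _ :: _, [], _, _ => Or.inr List.nil_prefix
  | x, b :: v, b' :: v', hforced, hc => by
    obtain rfl := hforced x b b' ⟨[], v, by simp⟩ (List.isChain_cons_cons.mp hc).1
    rcases prefix_or_prefix_of_isChain
        (fun z c c' h => hforced z c c' (h.trans (List.suffix_cons x _).isInfix))
        (List.isChain_cons_cons.mp hc).2 with h | h
    · exact Or.inl (List.cons_prefix_cons.mpr ⟨rfl, h⟩)
    · exact Or.inr (List.cons_prefix_cons.mpr ⟨rfl, h⟩)

end ListLemmas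

section CyclePow

theorem length_cyclePow (W : List A) (l : ℕ) : (cyclePow W l).length = l * W.length := by
  simp [cyclePow, List.length_flatten, List.map_replicate, List.sum_replicate]

theorem mem_of_mem_cyclePow {W : List A} {l : ℕ} {x : A} (h : x ∈ cyclePow W l) : x ∈ W := by
  obtain ⟨p, hp, hx⟩ := List.mem_flatten.mp h
  rwa [List.eq_of_mem_replicate hp] at hx

theorem cyclePow_ne_nil {W : List A} (hW : W ≠ []) {l : ℕ} (hl : l ≠ 0) : cyclePow W l ≠ [] := by
  simp [cyclePow, hW, hl]

theorem isChain_cyclePow {R : A → A → Prop} {W : List A} (hW : W ≠ []) (hc : W.IsChain R)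
    (hj : ∀ x ∈ W.getLast?, ∀ y ∈ W.head?, R x y) (l : ℕ) : (cyclePow W l).IsChain R :=
  (List.isChain_flatten (by simp [List.mem_replicate, hW.symm])).mpr
    ⟨fun p hp => List.eq_of_mem_replicate hp ▸ hc, List.isChain_replicate_of_rel l hj⟩

end CyclePow

def NonzeroPair (s t : A → V) (Zi : List A → Prop) (x y : A) : Prop :=
  t x = s y ∧ ¬ Zi [x, y]

/-- `I_N` is generated by paths of length two. -/
def IsQuadraticOn (s t : A → V) (Zi : List A → Prop) (N : Set A) : Prop :=
  ∀ p, PathIn s t N p → Zi p → ∃ x y, [x, y] <:+: p ∧ Zi [x, y]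

section Quadratic

variable {s t : A → V} {Zi : List A → Prop} {N : Set A}

theorem isChain_nonzeroPair_of_not_zi (hZ : ZeroClosed Zi) {p : List A} (hp : IsPath s t p)
    (hnz : ¬ Zi p) : p.IsChain (NonzeroPair s t Zi) := by
  refine List.isChain_iff_forall_rel_of_append_cons_cons.mpr fun x y l₁ l₂ hp' => ⟨?_, ?_⟩
  · exact List.isChain_iff_forall_rel_of_append_cons_cons.mp hp.2 hp'
  · exact fun h => hnz (hZ _ _ h ⟨l₁, l₂, by simp [hp']⟩)

theorem not_zi_of_isChain (hquad : IsQuadraticOn s t Zi N) {p : List A} (hp : p ≠ [])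
    (hpN : ∀ x ∈ p, x ∈ N) (hc : p.IsChain (NonzeroPair s t Zi)) : ¬ Zi p := by
  intro hZp
  obtain ⟨x, y, hxy, hZxy⟩ := hquad p ⟨⟨hp, hc.imp fun _ _ h => h.1⟩, hpN⟩ hZp
  exact (List.isChain_cons_cons.mp (hc.infix hxy)).1.2 hZxy

/-- A nonzero cycle would give nonzero paths of every length. -/
theorem not_nonzeroPair_getLast_head (hadm : Admissible s t Zi) (hquad : IsQuadraticOn s t Zi N)
    {W : List A} (hW : W ≠ []) (hWN : ∀ x ∈ W, x ∈ N) (hc : W.IsChain (NonzeroPair s t Zi)) :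
    ∀ x ∈ W.getLast?, ∀ y ∈ W.head?, ¬ NonzeroPair s t Zi x y := by
  intro x hx y hy hxy
  obtain ⟨m, hm, hmZ⟩ := hadm.2
  have hcm : (cyclePow W m).IsChain (NonzeroPair s t Zi) :=
    isChain_cyclePow hW hc
      (fun a ha b hb => Option.mem_unique hx ha ▸ Option.mem_unique hy hb ▸ hxy) m
  have hne : cyclePow W m ≠ [] := cyclePow_ne_nil hW (by omega)
  refine not_zi_of_isChain hquad hne (fun z hz => hWN z (mem_of_mem_cyclePow hz)) hcm
    (hmZ _ ⟨hne, hcm.imp fun _ _ h => h.1⟩ ?_)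
  rw [length_cyclePow]
  exact Nat.le_mul_of_pos_right m (List.length_pos_iff.mpr hW)

end Quadratic

section UniqueChain

variable {α : Type*} {R : α → α → Prop} {W : List α}

theorem cons_infix_of_isChain (hsucc : ∀ a b c, R a b → R a c → b = c)
    (hpred : ∀ a b c, R b a → R c a → b = c) (hW : W.IsChain R) (hWnd : W.Nodup)
    (hwrap : ∀ a ∈ W.getLast?, ∀ b ∈ W.head?, ¬ R a b) {x y : α} {l : List α} (hx : x ∈ W)
    (hxy : R x y) (hl : y :: l <:+: W) : x :: y :: l <:+: W := by
  obtain ⟨u, v, hWuv⟩ := hl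
  rcases u.eq_nil_or_concat with rfl | ⟨u, z, rfl⟩
  · have hy : y ∈ W.head? := by simp [← hWuv]
    obtain ⟨a, b, rfl⟩ := List.append_of_mem hx
    cases b with
    | nil => exact absurd hxy (hwrap x (by simp) y hy)
    | cons z b =>
      have hxz : R x z := List.isChain_iff_forall_rel_of_append_cons_cons.mp hW rfl
      obtain rfl := hsucc x y z hxy hxz
      exact absurd hy (not_mem_head?_of_pair_infix (x := x) hWnd ⟨a, b, by simp⟩)
  · have hzy : R z y :=
      List.isChain_iff_forall_rel_of_append_cons_cons.mp hW (l₁ := u) (l₂ := l ++ v)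
        (by simp [← hWuv])
    obtain rfl := hpred y x z hxy hzy
    exact ⟨u, v, by simp [← hWuv]⟩

theorem infix_of_isChain (hsucc : ∀ a b c, R a b → R a c → b = c)
    (hpred : ∀ a b c, R b a → R c a → b = c) (hW : W.IsChain R) (hWnd : W.Nodup)
    (hwrap : ∀ a ∈ W.getLast?, ∀ b ∈ W.head?, ¬ R a b) :
    ∀ {m : List α}, m ≠ [] → (∀ x ∈ m, x ∈ W) → m.IsChain R → m <:+: W
  | [], hm, _, _ => absurd rfl hm
  | [x], _, hmW, _ => (List.singleton_infix_iff _ _).mpr (hmW x (by simp))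
  | x :: y :: l, _, hmW, hm =>
    cons_infix_of_isChain hsucc hpred hW hWnd hwrap (hmW x (by simp))
      (List.isChain_cons_cons.mp hm).1
      (infix_of_isChain hsucc hpred hW hWnd hwrap (by simp)
        (fun z hz => hmW z (List.mem_cons_of_mem x hz)) (List.isChain_cons_cons.mp hm).2)

end UniqueChain

section MaxPath

variable {s t : A → V} {Zi : List A → Prop} {N : Set A}

theorem IsPath.append_singleton {p : List A} (hp : IsPath s t p) {x α : A} (hx : x ∈ p.getLast?)
    (hxα : t x = s α) : IsPath s t (p ++ [α]) := by
  refine ⟨by simp, List.isChain_append.mpr ⟨hp.2, List.isChain_singleton α, ?_⟩⟩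
  intro a ha b hb
  obtain rfl := Option.mem_unique ha hx
  obtain rfl : α = b := by simpa using hb
  exact hxα

theorem IsPath.cons {p : List A} (hp : IsPath s t p) {x α : A} (hx : x ∈ p.head?)
    (hαx : t α = s x) : IsPath s t (α :: p) :=
  ⟨by simp, List.isChain_cons.mpr ⟨fun y hy => Option.mem_unique hx hy ▸ hαx, hp.2⟩⟩

theorem infix_of_pathIn_of_not_zi (hZ : ZeroClosed Zi) (hsm : SpecialMultiserial s t Zi)
    {W : List A} (hWnd : W.Nodup) (hNW : ∀ x ∈ N, x ∈ W) (hc : W.IsChain (NonzeroPair s t Zi))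
    (hwrap : ∀ x ∈ W.getLast?, ∀ y ∈ W.head?, ¬ NonzeroPair s t Zi x y) {p : List A}
    (hp : PathIn s t N p) (hnz : ¬ Zi p) : p <:+: W :=
  infix_of_isChain (fun a b c => (hsm a b c).1) (fun a b c => (hsm a b c).2) hc hWnd hwrap
    hp.1.1 (fun x hx => hNW x (hp.2 x hx)) (isChain_nonzeroPair_of_not_zi hZ hp.1 hnz)

theorem maxPathIn_iff_eq_of_isChain (hZ : ZeroClosed Zi) (hquad : IsQuadraticOn s t Zi N)
    (hsm : SpecialMultiserial s t Zi) {W : List A} (hW : W ≠ []) (hWnd : W.Nodup)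
    (hNW : ∀ x, x ∈ N ↔ x ∈ W) (hc : W.IsChain (NonzeroPair s t Zi))
    (hwrap : ∀ x ∈ W.getLast?, ∀ y ∈ W.head?, ¬ NonzeroPair s t Zi x y) (m : List A) :
    MaxPathIn s t Zi N m ↔ m = W := by
  have hWN : ∀ x ∈ W, x ∈ N := fun x hx => (hNW x).2 hx
  have hWpath : IsPath s t W := ⟨hW, hc.imp fun _ _ h => h.1⟩
  have hinfix : ∀ {p : List A}, PathIn s t N p → ¬ Zi p → p <:+: W :=
    infix_of_pathIn_of_not_zi hZ hsm hWnd (fun x => (hNW x).1) hc hwrap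
  have hnz : ∀ {p : List A}, p ≠ [] → p <:+: W → ¬ Zi p := fun hp hpW =>
    not_zi_of_isChain hquad hp (fun x hx => hWN x (hpW.subset hx)) (hc.infix hpW)
  constructor
  · rintro ⟨hm, hmnz, hright, hleft⟩
    obtain ⟨u, v, rfl⟩ := hinfix hm hmnz
    cases v with
    | cons α v =>
      obtain ⟨x, hx⟩ : ∃ x, x ∈ m.getLast? := ⟨_, List.getLast?_eq_getLast_of_ne_nil hm.1.1⟩
      have hmα : m ++ [α] <:+: u ++ m ++ α :: v := ⟨u, v, by simp⟩
      refine absurd (hright α (hWN α (by simp)) ⟨x, hx, ?_⟩) (hnz (by simp) hmα)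
      exact ((List.isChain_append.mp (hc.infix hmα)).2.2 x hx α rfl).1
    | nil =>
      rcases u.eq_nil_or_concat with rfl | ⟨u, α, rfl⟩
      · simp
      obtain ⟨x, hx⟩ : ∃ x, x ∈ m.head? := ⟨_, List.head?_eq_some_head hm.1.1⟩
      have hαm : α :: m <:+: u.concat α ++ m ++ [] := ⟨u, [], by simp⟩
      refine absurd (hleft α (hWN α (by simp)) ⟨x, hx, ?_⟩) (hnz (by simp) hαm)
      exact (List.isChain_cons.mp (hc.infix hαm)).1 x hx |>.1
  · rintro rfl
    refine ⟨⟨hWpath, hWN⟩, hnz hW (List.infix_refl m), ?_, ?_⟩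
    · rintro α hα ⟨x, hx, hxα⟩
      by_contra hWα
      have hlen := (hinfix ⟨hWpath.append_singleton hx hxα,
        List.forall_mem_append.mpr ⟨hWN, List.forall_mem_singleton.mpr hα⟩⟩ hWα).length_le
      simp at hlen
    · rintro α hα ⟨x, hx, hαx⟩
      by_contra hαW
      have hlen := (hinfix ⟨hWpath.cons hx hαx,
        List.forall_mem_cons.mpr ⟨hα, hWN⟩⟩ hαW).length_le
      simp at hlen

end MaxPath

section Phi

variable {s t : A → V}

theorem Phi.of_mem {a b : A} {p : List A} (hp : p ∈ Phi s t a) (hb : b ∈ p) : p ∈ Phi s t b :=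
  ⟨hp.1, (List.singleton_infix_iff b p).mpr hb, hp.2.2⟩

theorem Phi.succ_unique {a z b b' : A} {p : List A} (hp : p ∈ Phi s t a) (h : [z, b] <:+: p)
    (hb' : t z = s b') : b' = b := by
  obtain ⟨c, -, hc⟩ := (hp.2.2 z (mem_dropLast_of_pair_infix h)).1
  have hzb : t z = s b := (List.isChain_cons_cons.mp (hp.1.2.infix h)).1
  exact (hc b' hb'.symm).trans (hc b hzb.symm).symm

theorem Phi.pred_unique {a z z' b : A} {p : List A} (hp : p ∈ Phi s t a) (h : [z, b] <:+: p)
    (hz' : t z' = s b) : z' = z := by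
  obtain ⟨c, -, hc⟩ := (hp.2.2 z (mem_dropLast_of_pair_infix h)).2
  have hzb : t z = s b := (List.isChain_cons_cons.mp (hp.1.2.infix h)).1
  exact (hc z' (hz'.trans hzb.symm)).trans (hc z rfl).symm

theorem Phi.glue {a b x : A} {l r l' r' : List A} (hp : l ++ x :: r' ∈ Phi s t a)
    (hq : l' ++ x :: r ∈ Phi s t b) : l ++ x :: r ∈ Phi s t x := by
  refine ⟨⟨by simp, ?_⟩, ⟨l, r, by simp⟩, fun z hz => ?_⟩
  · have hl : (l ++ [x]).IsChain (fun a b => t a = s b) := hp.1.2.infix ⟨[], r', by simp⟩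
    have hr : ([x] ++ r).IsChain (fun a b => t a = s b) := hq.1.2.infix ⟨l', [], by simp⟩
    have hlr := hl.append_overlap hr (List.cons_ne_nil x [])
    simp only [List.append_assoc, List.singleton_append] at hlr
    exact hlr
  · rw [List.dropLast_append_cons] at hz
    rcases List.mem_append.mp hz with hz | hz
    · exact hp.2.2 z (by rw [List.dropLast_append_cons]; exact List.mem_append_left _ hz)
    · exact hq.2.2 z (by rw [List.dropLast_append_cons]; exact List.mem_append_right _ hz)

theorem Phi.infix_of_maximal {x : A} {p q : List A} (hp : p ∈ Phi s t x) (hq : q ∈ Phi s t x)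
    (hmax : ∀ r ∈ Phi s t x, r.length ≤ q.length) : p <:+: q := by
  obtain ⟨u, v, rfl⟩ := List.append_of_mem ((List.singleton_infix_iff x p).mp hp.2.1)
  obtain ⟨u', v', rfl⟩ := List.append_of_mem ((List.singleton_infix_iff x q).mp hq.2.1)
  have hu : u.length ≤ u'.length := by simpa using hmax _ (Phi.glue hp hq)
  have hv : v.length ≤ v'.length := by simpa using hmax _ (Phi.glue hq hp)
  have hfwd : v <+: v' := by
    rcases prefix_or_prefix_of_isChain (R := fun a b => t a = s b)
        (fun z b b' h hb' => Phi.succ_unique hp (h.trans (List.suffix_append u _).isInfix) hb')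
        (hq.1.2.infix (List.suffix_append u' _).isInfix) with h | h
    · exact h
    · exact h.eq_of_length (le_antisymm h.length_le hv) ▸ List.prefix_refl v
  have hbwd : u <:+ u' := by
    have hrev := prefix_or_prefix_of_isChain (R := fun a b => t b = s a) (x := x)
      (v := u.reverse) (v' := u'.reverse)
      (fun z b b' h hb' => Phi.pred_unique hp
        ((List.reverse_infix.mp (by simpa using h) : [b, z] <:+: u ++ [x]).trans
          ⟨[], v, by simp⟩) hb')
      (by simpa using List.isChain_reverse.mpr (hq.1.2.infix (l₁ := u' ++ [x]) ⟨[], v', by simp⟩))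
    rw [List.reverse_prefix, List.reverse_prefix] at hrev
    rcases hrev with h | h
    · exact h
    · exact h.eq_of_length (le_antisymm h.length_le hu) ▸ List.suffix_refl u
  obtain ⟨e, rfl⟩ := hbwd
  obtain ⟨f, rfl⟩ := hfwd
  exact ⟨e, f, by simp⟩

end Phi

section Omega

variable {s t : A → V} {ω : A → List A}

theorem omega_isPath (hω : OmegaSpec s t ω) (a : A) : IsPath s t (ω a) := by
  by_cases hc : IsCyclicQuiver s t
  · obtain ⟨p, hp, -, -, -, hall⟩ := hω.1 hc
    exact hall a ▸ hp
  · exact (hω.2 hc a).1.1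

theorem mem_omega_self (hω : OmegaSpec s t ω) (a : A) : a ∈ ω a := by
  by_cases hc : IsCyclicQuiver s t
  · obtain ⟨p, -, -, hmem, -, hall⟩ := hω.1 hc
    exact hall a ▸ hmem a
  · exact (List.singleton_infix_iff a _).mp (hω.2 hc a).1.2.1

theorem omega_eq_of_mem_s10 (hω : OmegaSpec s t ω) {a x : A} (hx : x ∈ ω a) : ω x = ω a := by
  by_cases hc : IsCyclicQuiver s t
  · obtain ⟨p, -, -, -, -, hall⟩ := hω.1 hc
    rw [hall a, hall x]
  obtain ⟨hxΦ, hxmax⟩ := hω.2 hc x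
  obtain ⟨haΦ, hamax⟩ := hω.2 hc a
  have hinf : ω a <:+: ω x := Phi.infix_of_maximal (Phi.of_mem haΦ hx) hxΦ hxmax
  exact (hinf.eq_of_length_le (hamax _ ⟨hxΦ.1, haΦ.2.1.trans hinf, hxΦ.2.2⟩)).symm

/-- A repeated arrow `x` would let the loop between its two occurrences be run twice. -/
theorem omega_nodup (hω : OmegaSpec s t ω) (a : A) : (ω a).Nodup := by
  by_cases hc : IsCyclicQuiver s t
  · obtain ⟨p, -, hnd, -, -, hall⟩ := hω.1 hc
    exact hall a ▸ hnd
  obtain ⟨haΦ, hamax⟩ := hω.2 hc a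
  refine List.nodup_iff_sublist.mpr fun x hx => ?_
  obtain ⟨r₁, r₂, heq, h₁, h₂⟩ :=
    List.append_sublist_iff.mp (show List.Sublist ([x] ++ [x]) (ω a) from hx)
  obtain ⟨u, v, rfl⟩ := List.append_of_mem (List.singleton_sublist.mp h₁)
  obtain ⟨v', w, rfl⟩ := List.append_of_mem (List.singleton_sublist.mp h₂)
  have hglue := Phi.glue (l := u ++ x :: (v ++ v')) (r' := w) (l' := u)
    (r := v ++ v' ++ x :: w) (by simpa [heq] using haΦ) (by simpa [heq] using haΦ)
  have ha : a ∈ u ++ x :: (v ++ v') ++ x :: (v ++ v' ++ x :: w) := by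
    have ha := mem_omega_self hω a
    simp only [heq, List.mem_append, List.mem_cons] at ha ⊢
    tauto
  have hlen := hamax _ (Phi.of_mem hglue ha)
  simp [heq] at hlen
  omega

end Omega

section Component

variable {s t : A → V} {Zi : List A → Prop} {ω : A → List A} {N : Set A}

theorem mem_of_mem_omega (hω : OmegaSpec s t ω) (hN : IsComp s t Zi ω N) {a x : A} (ha : a ∈ N)
    (hx : x ∈ ω a) : x ∈ N := by
  obtain ⟨a₀, rfl⟩ := hN
  exact Relation.ReflTransGen.tail ha (Or.inl (omega_eq_of_mem_s10 hω hx).symm)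

theorem CompEnum.mem_flatten_iff (hω : OmegaSpec s t ω) (hN : IsComp s t Zi ω N)
    {ws : List (List A)} (hws : CompEnum s t Zi ω N ws) {x : A} : x ∈ ws.flatten ↔ x ∈ N := by
  rw [List.mem_flatten]
  constructor
  · rintro ⟨p, hp, hx⟩
    obtain ⟨a, ha, rfl⟩ := (hws.2.2.1 p).mp hp
    exact mem_of_mem_omega hω hN ha hx
  · exact fun hx => ⟨ω x, (hws.2.2.1 _).mpr ⟨x, hx, rfl⟩, mem_omega_self hω x⟩

theorem CompEnum.nodup_flatten (hω : OmegaSpec s t ω) {ws : List (List A)}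
    (hws : CompEnum s t Zi ω N ws) : ws.flatten.Nodup := by
  have homega : ∀ p ∈ ws, ∀ x ∈ p, ω x = p := fun p hp x hx => by
    obtain ⟨a, -, rfl⟩ := (hws.2.2.1 p).mp hp
    exact omega_eq_of_mem_s10 hω hx
  refine List.nodup_flatten.mpr ⟨fun p hp => ?_, hws.2.1.imp_of_mem ?_⟩
  · obtain ⟨a, -, rfl⟩ := (hws.2.2.1 p).mp hp
    exact omega_nodup hω a
  · exact fun hp hq hpq x hxp hxq => hpq ((homega _ hp x hxp).symm.trans (homega _ hq x hxq))

theorem isJuncRel_of_sRel_eq_empty {R : Set (List A)} (hS : SRel ω N R = ∅) {r : List A}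
    (hr : r ∈ R) : IsJuncRel ω N r := by
  by_contra h
  exact Set.eq_empty_iff_forall_notMem.mp hS r ⟨hr, h⟩

theorem isQuadraticOn_of_sRel_eq_empty {R : Set (List A)} (hR : MinGen s t Zi N R)
    (hS : SRel ω N R = ∅) : IsQuadraticOn s t Zi N := by
  intro p hp hZp
  obtain ⟨r, hr, hrp⟩ := (hR.2.1 p hp).mp hZp
  obtain ⟨-, -, -, -, x, -, y, -, rfl⟩ := isJuncRel_of_sRel_eq_empty hS hr
  exact ⟨x, y, hrp, (hR.1 _ hr).2⟩

theorem mem_getLast?_omega_of_zi (hω : OmegaSpec s t ω) {R : Set (List A)}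
    (hR : MinGen s t Zi N R) (hS : SRel ω N R = ∅) {x y : A} (hxy : PathIn s t N [x, y])
    (hZ : Zi [x, y]) : x ∈ (ω x).getLast? := by
  obtain ⟨r, hr, hrxy⟩ := (hR.2.1 _ hxy).mp hZ
  obtain ⟨a, -, b, -, x', hx', y', -, rfl⟩ := isJuncRel_of_sRel_eq_empty hS hr
  obtain ⟨rfl, rfl⟩ : x' = x ∧ y' = y := by simpa using hrxy.eq_of_length rfl
  rwa [omega_eq_of_mem_s10 hω (List.mem_of_mem_getLast? hx')]

theorem CompEnum.isChain_flatten (hω : OmegaSpec s t ω) (hN : IsComp s t Zi ω N)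
    {R : Set (List A)} (hR : MinGen s t Zi N R) (hS : SRel ω N R = ∅) {ws : List (List A)}
    (hws : CompEnum s t Zi ω N ws) : ws.flatten.IsChain (NonzeroPair s t Zi) := by
  have hnil : [] ∉ ws := fun h => by
    obtain ⟨a, -, ha⟩ := (hws.2.2.1 []).mp h
    exact (omega_isPath hω a).1 ha
  refine (List.isChain_flatten hnil).mpr ⟨fun p hp => ?_, hws.2.2.2.1.imp ?_⟩
  · obtain ⟨a, ha, rfl⟩ := (hws.2.2.1 p).mp hp
    refine List.isChain_iff_forall_rel_of_append_cons_cons.mpr fun x y l₁ l₂ hl => ?_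
    have hts : t x = s y :=
      List.isChain_iff_forall_rel_of_append_cons_cons.mp (omega_isPath hω a).2 hl
    have hxy : [x, y] <:+: ω a := ⟨l₁, l₂, by rw [hl]; simp⟩
    refine ⟨hts, fun hZ => not_mem_getLast?_of_pair_infix (omega_nodup hω a) hxy ?_⟩
    have hxyN : ∀ z ∈ [x, y], z ∈ N := fun z hz => mem_of_mem_omega hω hN ha (hxy.subset hz)
    have hlast :=
      mem_getLast?_omega_of_zi hω hR hS ⟨⟨by simp, List.isChain_pair.mpr hts⟩, hxyN⟩ hZ
    rwa [omega_eq_of_mem_s10 hω (hxy.subset (by simp))] at hlast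
  · rintro p q ⟨x', hx', y', hy', hxy'⟩ x hx y hy
    rwa [Option.mem_unique hx hx', Option.mem_unique hy hy']

end Component

theorem stmt_10_general (s t : A → V) (Zi : List A → Prop)
    (ω : A → List A) (hω : OmegaSpec s t ω)
    (hZ : ZeroClosed Zi) (hadm : Admissible s t Zi)
    (hsm : SpecialMultiserial s t Zi)
    (N : Set A) (hN : IsComp s t Zi ω N)
    (ws : List (List A)) (hws : CompEnum s t Zi ω N ws)
    (R : Set (List A)) (hR : MinGen s t Zi N R)
    (hS : SRel ω N R = ∅) :
    (∀ m : List A, MaxPathIn s t Zi N m ↔ m = ws.flatten) ∧ UMPin s t Zi N := by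
  have hquad := isQuadraticOn_of_sRel_eq_empty hR hS
  have hW : ws.flatten ≠ [] := hws.2.2.2.2.1
  have hNW : ∀ x, x ∈ N ↔ x ∈ ws.flatten := fun x => (hws.mem_flatten_iff hω hN).symm
  have hc := hws.isChain_flatten hω hN hR hS
  have hwrap := not_nonzeroPair_getLast_head hadm hquad hW (fun x => (hNW x).mpr) hc
  have hmax := maxPathIn_iff_eq_of_isChain hZ hquad hsm hW (hws.nodup_flatten hω) hNW hc hwrap
  exact ⟨hmax, fun m m' hm hm' _ => ((hmax m).mp hm).trans ((hmax m').mp hm').symm⟩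

/-- if `S_N = ∅`, then the set of maximal paths of `A_N` is exactly
`{ω(N) + I_N}`; in particular `A_N` is a UMP algebra. -/
theorem stmt_10 [Fintype V] [Fintype A] (s t : A → V) (Zi : List A → Prop)
    (ω : A → List A) (hω : OmegaSpec s t ω)
    (hZ : ZeroClosed Zi) (hadm : Admissible s t Zi)
    (hsm : SpecialMultiserial s t Zi)
    (N : Set A) (hN : IsComp s t Zi ω N)
    (ws : List (List A)) (hws : CompEnum s t Zi ω N ws)
    (R : Set (List A)) (hR : MinGen s t Zi N R)
    (hS : SRel ω N R = ∅) :
    (∀ m : List A, MaxPathIn s t Zi N m ↔ m = ws.flatten) ∧ UMPin s t Zi N :=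
  stmt_10_general s t Zi ω hω hZ hadm hsm N hN ws hws R hR hS

end UMPPaper
end
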